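/- arXiv:1105.2652 — 6 statements merged into one kernel-verified Lean document; each statement's English description precedes it below -/
import Mathlib

section
/- Suppose (P1) and (C1)–(C3) hold. If ∫₀^∞ t Σ_{j=1}^d ψ_j(t) dt = ∞, where ψ_j(t) = min_{|x|=t} p_j(x), and the function r ↦ r^{2N-2} Σ_{j=1}^d ψ_j(r) is nondecreasing for all sufficiently large r, then the system Δu_i = p_i(x) f_i(u_1,…,u_d), i = 1,…,d, has no nonnegative nontrivial entire bounded radial solution on ℝ^N. -/
/-!
Along a ray, a radial function `u(x) = g(|x|)` has Laplacian `g'' + (N-1) g'/r`, i.e.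
`(r^(N-1) g')' = r^(N-1) Δu`. Since every `Δuᵢ ≥ 0`, the flux `r^(N-1) gᵢ'` is nondecreasing from
its value `0` at the origin, so each `uᵢ` is nondecreasing in `|x|`. If `u_{i₀}(x₀) = c > 0`, then
`(C1)`–`(C2)` give `f_j(u(x)) ≥ ε > 0` for all `j` once `|x| ≥ |x₀|`, so the sum `w = Σ uᵢ`
satisfies `(r^(N-1) w')' ≥ ε r^(N-1) q` with `q = Σ ψⱼ`. Integrating over `[s, 2s]` and using that
`r^(2N-2) q` is nondecreasing yields `s q(s) ≤ C w'(2s)`; as `w` is bounded and nondecreasing, `w'`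
is integrable at infinity, hence so is `s q(s)`. Near the origin `q` is continuous, being a
minimum of continuous functions over spheres, so `∫₀^∞ t q(t) dt < ∞`, a contradiction.
-/

open MeasureTheory Set Filter

/-- The Laplacian of a function on Euclidean space, as the sum of the pure second
derivatives in the coordinate directions. -/
noncomputable def lap {N : ℕ} (u : EuclideanSpace ℝ (Fin N) → ℝ)
    (x : EuclideanSpace ℝ (Fin N)) : ℝ :=
  ∑ i : Fin N,
    iteratedFDeriv ℝ 2 u x ![EuclideanSpace.single i 1, EuclideanSpace.single i 1]

/-- On `ℝ^(n+1)`, `Δ (g ‖x‖) = radialLaplacian n g ‖x‖` away from the origin. -/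
noncomputable def radialLaplacian (n : ℕ) (g : ℝ → ℝ) (r : ℝ) : ℝ :=
  deriv (deriv g) r + n * deriv g r / r

theorem hasDerivAt_pow_mul_deriv (n : ℕ) {g : ℝ → ℝ} {r : ℝ} (hr : r ≠ 0)
    (hg : DifferentiableAt ℝ (deriv g) r) :
    HasDerivAt (fun t => t ^ n * deriv g t) (r ^ n * radialLaplacian n g r) r := by
  refine ((hasDerivAt_pow n r).mul hg.hasDerivAt).congr_deriv ?_
  rcases n with _ | n
  · simp [radialLaplacian]
  · simp only [radialLaplacian]
    field_simp
    push_cast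
    ring

theorem deriv_nonneg_of_radialLaplacian_nonneg {n : ℕ} (hn : n ≠ 0) {g : ℝ → ℝ}
    (hg : Differentiable ℝ (deriv g)) (hΔ : ∀ r, 0 < r → 0 ≤ radialLaplacian n g r)
    {r : ℝ} (hr : 0 < r) : 0 ≤ deriv g r := by
  have hmono : MonotoneOn (fun t => t ^ n * deriv g t) (Ici 0) := by
    refine monotoneOn_of_hasDerivWithinAt_nonneg (f' := fun t => t ^ n * radialLaplacian n g t)
      (convex_Ici 0) ((continuous_pow n).mul hg.continuous).continuousOn
      (fun t ht => ?_) (fun t ht => ?_) <;> rw [interior_Ici, mem_Ioi] at ht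
    · exact (hasDerivAt_pow_mul_deriv n ht.ne' (hg t)).hasDerivWithinAt
    · exact mul_nonneg (pow_nonneg ht.le n) (hΔ t ht)
  have h : 0 ^ n * deriv g 0 ≤ r ^ n * deriv g r := hmono self_mem_Ici hr.le hr.le
  rw [zero_pow hn, zero_mul] at h
  exact (mul_nonneg_iff_of_pos_left (pow_pos hr n)).1 h

theorem mul_le_four_pow_mul_deriv_two_mul {n : ℕ} {g q : ℝ → ℝ} {a ε : ℝ} (ha : 0 < a)
    (hε : 0 ≤ ε) (hg : Differentiable ℝ (deriv g)) (hg' : ∀ r, a ≤ r → 0 ≤ deriv g r)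
    (hq : ∀ r, a ≤ r → 0 ≤ q r) (hmono : MonotoneOn (fun r => r ^ (2 * n) * q r) (Ici a))
    (hΔ : ∀ r, a ≤ r → ε * q r ≤ radialLaplacian n g r) {s : ℝ} (hs : a ≤ s) :
    ε * (s * q s) ≤ 4 ^ n * deriv g (2 * s) := by
  have hs0 : 0 < s := ha.trans_le hs
  have hflux (t : ℝ) (ht : t ∈ Icc s (2 * s)) :
      ε * (s ^ n * q s / 2 ^ n) ≤ t ^ n * radialLaplacian n g t := by
    have ht0 : 0 < t := hs0.trans_le ht.1
    have hqt : 0 ≤ t ^ n * q t := mul_nonneg (pow_nonneg ht0.le n) (hq t (hs.trans ht.1))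
    have hpow : t ^ n ≤ 2 ^ n * s ^ n := by
      rw [← mul_pow]; exact pow_le_pow_left₀ ht0.le ht.2 n
    have hsq : s ^ n * q s * s ^ n ≤ 2 ^ n * (t ^ n * q t) * s ^ n :=
      calc s ^ n * q s * s ^ n = s ^ (2 * n) * q s := by ring
        _ ≤ t ^ (2 * n) * q t := hmono hs (hs.trans ht.1) ht.1
        _ = t ^ n * q t * t ^ n := by ring
        _ ≤ t ^ n * q t * (2 ^ n * s ^ n) := mul_le_mul_of_nonneg_left hpow hqt
        _ = 2 ^ n * (t ^ n * q t) * s ^ n := by ring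
    calc ε * (s ^ n * q s / 2 ^ n) ≤ ε * (t ^ n * q t) := by
          refine mul_le_mul_of_nonneg_left ?_ hε
          rw [div_le_iff₀ (by positivity), mul_comm _ (2 ^ n)]
          exact le_of_mul_le_mul_right hsq (pow_pos hs0 n)
      _ = t ^ n * (ε * q t) := by ring
      _ ≤ t ^ n * radialLaplacian n g t :=
          mul_le_mul_of_nonneg_left (hΔ t (hs.trans ht.1)) (pow_nonneg ht0.le n)
  have hφ (t : ℝ) (ht : t ∈ Icc s (2 * s)) :
      HasDerivAt (fun t => t ^ n * deriv g t) (t ^ n * radialLaplacian n g t) t :=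
    hasDerivAt_pow_mul_deriv n (hs0.trans_le ht.1).ne' (hg t)
  have hgrowth := (convex_Icc s (2 * s)).mul_sub_le_image_sub_of_le_deriv
    (fun t ht => (hφ t ht).continuousAt.continuousWithinAt)
    (fun t ht => (hφ t (interior_subset ht)).differentiableAt.differentiableWithinAt)
    (fun t ht => (hφ t (interior_subset ht)).deriv ▸ hflux t (interior_subset ht))
    s (left_mem_Icc.2 (by linarith)) (2 * s) (right_mem_Icc.2 (by linarith)) (by linarith)
  have hφs : 0 ≤ s ^ n * deriv g s := mul_nonneg (pow_nonneg hs0.le n) (hg' s hs)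
  have key : s ^ n * (ε * (s * q s)) ≤ s ^ n * (4 ^ n * deriv g (2 * s)) :=
    calc s ^ n * (ε * (s * q s)) = 2 ^ n * (ε * (s ^ n * q s / 2 ^ n) * (2 * s - s)) := by
          field_simp; ring
      _ ≤ 2 ^ n * ((2 * s) ^ n * deriv g (2 * s)) :=
          mul_le_mul_of_nonneg_left (by linarith) (by positivity)
      _ = s ^ n * (4 ^ n * deriv g (2 * s)) := by
          rw [mul_pow, show (4 : ℝ) = 2 * 2 by norm_num, mul_pow]; ring
  exact le_of_mul_le_mul_left key (pow_pos hs0 n)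

theorem integrableOn_Ioi_deriv_of_nonneg_of_le {g : ℝ → ℝ} {a M : ℝ} (hg : Differentiable ℝ g)
    (hg' : ∀ x ∈ Ioi a, 0 ≤ deriv g x) (hM : ∀ x, g x ≤ M) : IntegrableOn (deriv g) (Ioi a) := by
  have hmono : Monotone fun x => g (max a x) := by
    refine fun x y hxy => monotoneOn_of_deriv_nonneg (convex_Ici a) hg.continuous.continuousOn
      hg.differentiableOn (fun t ht => ?_) (le_max_left a x) (le_max_left a y)
      (max_le_max_left a hxy)
    rw [interior_Ici] at ht
    exact hg' t ht
  have hlim := tendsto_atTop_ciSup hmono ⟨M, by rintro _ ⟨x, rfl⟩; exact hM _⟩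
  refine integrableOn_Ioi_deriv_of_nonneg' (fun x _ => (hg x).hasDerivAt) hg' (hlim.congr' ?_)
  filter_upwards [eventually_ge_atTop a] with x hx
  rw [max_eq_right hx]

theorem integrableOn_Ioi_mul_of_le_radialLaplacian {n : ℕ} {g q : ℝ → ℝ} {a ε M : ℝ}
    (ha : 0 < a) (hε : 0 < ε) (hg : ContDiff ℝ 2 g) (hM : ∀ t, g t ≤ M)
    (hg' : ∀ r, a ≤ r → 0 ≤ deriv g r) (hq : ∀ r, a ≤ r → 0 ≤ q r)
    (hmono : MonotoneOn (fun r => r ^ (2 * n) * q r) (Ici a))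
    (hΔ : ∀ r, a ≤ r → ε * q r ≤ radialLaplacian n g r) :
    IntegrableOn (fun s => s * q s) (Ioi a) := by
  have hdom : IntegrableOn (fun s => ε⁻¹ * (4 ^ n * deriv g (2 * s))) (Ioi a) := by
    refine (Integrable.const_mul ?_ _).const_mul _
    refine (integrableOn_Ioi_comp_mul_left_iff (deriv g) a two_pos).2 ?_
    refine integrableOn_Ioi_deriv_of_nonneg_of_le (hg.differentiable two_ne_zero)
      (fun x hx => hg' x ?_) hM
    linarith [mem_Ioi.1 hx]
  have hmeas : AEStronglyMeasurable (fun s => s * q s) (volume.restrict (Ioi a)) := by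
    have hm := aemeasurable_restrict_of_monotoneOn (μ := volume) measurableSet_Ioi
      (hmono.mono Ioi_subset_Ici_self)
    refine ((hm.mul (by fun_prop : Measurable fun s : ℝ => s / s ^ (2 * n)).aemeasurable)
      ).aestronglyMeasurable.congr ?_
    filter_upwards [ae_restrict_mem measurableSet_Ioi] with s hs
    have : s ^ (2 * n) ≠ 0 := pow_ne_zero _ (ha.trans hs).ne'
    simp only [Pi.mul_apply]
    field_simp
  refine hdom.mono' hmeas ((ae_restrict_iff' measurableSet_Ioi).2 (Eventually.of_forall
    fun s hs => ?_))
  have hs : a ≤ s := le_of_lt hs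
  rw [Real.norm_of_nonneg (mul_nonneg (ha.trans_le hs).le (hq s hs))]
  exact (le_inv_mul_iff₀ hε).2
    (mul_le_four_pow_mul_deriv_two_mul ha hε.le hg.differentiable_deriv_two hg' hq hmono hΔ hs)

theorem iteratedFDeriv_two_apply_self_eq_deriv_deriv {E : Type*} [NormedAddCommGroup E]
    [NormedSpace ℝ E] {w : E → ℝ} (hw : ContDiff ℝ 2 w) (x v : E) :
    iteratedFDeriv ℝ 2 w x ![v, v] = deriv (deriv fun t : ℝ => w (x + t • v)) 0 := by
  have hline (t : ℝ) : HasDerivAt (fun s : ℝ => x + s • v) v t := by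
    simpa using ((hasDerivAt_id t).smul_const v).const_add x
  have hderiv : deriv (fun t : ℝ => w (x + t • v)) = fun t => fderiv ℝ w (x + t • v) v :=
    funext fun t => ((hw.differentiable two_ne_zero _).hasFDerivAt.comp_hasDerivAt t
      (hline t)).deriv
  have hw' : Differentiable ℝ (fderiv ℝ w) := (hw.fderiv_right le_rfl).differentiable one_ne_zero
  have h2 : HasDerivAt (fun t : ℝ => fderiv ℝ w (x + t • v) v) (fderiv ℝ (fderiv ℝ w) x v v) 0 := by
    have := (hw' _).hasFDerivAt.comp_hasDerivAt (0 : ℝ) (hline 0)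
    rw [zero_smul, add_zero] at this
    exact (ContinuousLinearMap.apply ℝ ℝ v).hasFDerivAt.comp_hasDerivAt 0 this
  rw [hderiv, iteratedFDeriv_two_apply, h2.deriv]
  rfl

theorem deriv_deriv_comp_sqrt_sq_add_sq_zero {g : ℝ → ℝ} {r : ℝ} (hr : 0 < r)
    (hg : Differentiable ℝ g) (hg' : DifferentiableAt ℝ (deriv g) r) :
    deriv (deriv fun t : ℝ => g (√(r ^ 2 + t ^ 2))) 0 = deriv g r / r := by
  set ρ : ℝ → ℝ := fun t => √(r ^ 2 + t ^ 2)
  have hρ0 : ρ 0 = r := by simp [ρ, Real.sqrt_sq hr.le]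
  have hρ (t : ℝ) : HasDerivAt ρ (t * (ρ t)⁻¹) t := by
    have hpos : 0 < r ^ 2 + t ^ 2 := by positivity
    refine ((Real.hasDerivAt_sqrt hpos.ne').comp t
      ((hasDerivAt_pow 2 t).const_add (r ^ 2))).congr_deriv ?_
    rw [show ρ t = √(r ^ 2 + t ^ 2) from rfl]
    field_simp
    norm_num
  have hderiv : deriv (fun t => g (ρ t)) = fun t => deriv g (ρ t) * (t * (ρ t)⁻¹) :=
    funext fun t => ((hg _).hasDerivAt.comp t (hρ t)).deriv
  have h2 : HasDerivAt (fun t => deriv g (ρ t) * (t * (ρ t)⁻¹)) (deriv g r / r) 0 := by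
    refine ((hg'.hasDerivAt.comp_of_eq 0 (hρ 0) hρ0.symm).mul
      ((hasDerivAt_id 0).mul ((hρ 0).inv (by rw [hρ0]; exact hr.ne')))).congr_deriv ?_
    simp only [Pi.mul_apply, Pi.inv_apply, Function.comp_apply, hρ0]
    ring
  rw [hderiv, h2.deriv]

theorem apply_eq_apply_norm_smul_single {N : ℕ} {w : EuclideanSpace ℝ (Fin N) → ℝ}
    (hrad : ∀ x y, ‖x‖ = ‖y‖ → w x = w y) (i₀ : Fin N) (y : EuclideanSpace ℝ (Fin N)) :
    w y = w (‖y‖ • EuclideanSpace.single i₀ 1) :=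
  hrad y _ (by simp [norm_smul])

theorem norm_smul_single_add_smul_single {N : ℕ} {i j : Fin N} (hij : i ≠ j) (r t : ℝ) :
    ‖r • EuclideanSpace.single j (1 : ℝ) + t • EuclideanSpace.single i 1‖ = √(r ^ 2 + t ^ 2) := by
  have horth :
      inner ℝ (r • EuclideanSpace.single j (1 : ℝ)) (t • EuclideanSpace.single i 1) = 0 := by
    simp [real_inner_smul_left, real_inner_smul_right, EuclideanSpace.inner_single_left, hij]
  rw [← Real.sqrt_sq (norm_nonneg _), norm_add_sq_real, horth]
  simp [norm_smul]

theorem lap_smul_single_of_radial {N : ℕ} {w : EuclideanSpace ℝ (Fin N) → ℝ}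
    (hw : ContDiff ℝ 2 w) (hrad : ∀ x y, ‖x‖ = ‖y‖ → w x = w y) (i₀ : Fin N) {r : ℝ}
    (hr : 0 < r) :
    lap w (r • EuclideanSpace.single i₀ 1) =
      radialLaplacian (N - 1) (fun t => w (t • EuclideanSpace.single i₀ 1)) r := by
  set e : EuclideanSpace ℝ (Fin N) := EuclideanSpace.single i₀ 1
  set g : ℝ → ℝ := fun t => w (t • e)
  have hg : ContDiff ℝ 2 g := hw.comp (contDiff_id.smul contDiff_const)
  have hg' : Differentiable ℝ (deriv g) := hg.differentiable_deriv_two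
  have hdiag : iteratedFDeriv ℝ 2 w (r • e) ![e, e] = deriv (deriv g) r := by
    have hderiv : deriv (fun t => g (r + t)) = fun t => deriv g (r + t) :=
      funext (deriv_comp_const_add g r)
    rw [iteratedFDeriv_two_apply_self_eq_deriv_deriv hw]
    simp_rw [← add_smul]
    rw [show (fun t : ℝ => w ((r + t) • e)) = fun t => g (r + t) from rfl, hderiv,
      deriv_comp_const_add, add_zero]
  have hoff (i : Fin N) (hi : i ≠ i₀) :
      iteratedFDeriv ℝ 2 w (r • e) ![EuclideanSpace.single i 1, EuclideanSpace.single i 1] =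
        deriv g r / r := by
    have hline : (fun t : ℝ => w (r • e + t • EuclideanSpace.single i 1)) =
        fun t => g √(r ^ 2 + t ^ 2) := funext fun t => by
      rw [apply_eq_apply_norm_smul_single hrad i₀, norm_smul_single_add_smul_single hi]
    rw [iteratedFDeriv_two_apply_self_eq_deriv_deriv hw, hline]
    exact deriv_deriv_comp_sqrt_sq_add_sq_zero hr (hg.differentiable two_ne_zero) (hg' r)
  rw [lap, ← Finset.add_sum_erase _ _ (Finset.mem_univ i₀), hdiag,
    Finset.sum_congr rfl fun i hi => hoff i (Finset.ne_of_mem_erase hi), Finset.sum_const,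
    Finset.card_erase_of_mem (Finset.mem_univ i₀), Finset.card_univ, Fintype.card_fin,
    nsmul_eq_mul, radialLaplacian, mul_div_assoc]

theorem lap_fun_sum {N : ℕ} {ι : Type*} {s : Finset ι} {u : ι → EuclideanSpace ℝ (Fin N) → ℝ}
    (hu : ∀ i ∈ s, ContDiff ℝ 2 (u i)) (x : EuclideanSpace ℝ (Fin N)) :
    lap (fun y => ∑ i ∈ s, u i y) x = ∑ i ∈ s, lap (u i) x := by
  simp only [lap, iteratedFDeriv_fun_sum_apply fun i hi => (hu i hi).contDiffAt, sum_apply]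
  exact Finset.sum_comm

section Radial

variable {N : ℕ} {w : EuclideanSpace ℝ (Fin N) → ℝ}

theorem deriv_nonneg_of_lap_nonneg (hN : 2 ≤ N) (hw : ContDiff ℝ 2 w)
    (hrad : ∀ x y, ‖x‖ = ‖y‖ → w x = w y) (hlap : ∀ x, 0 ≤ lap w x) (i₀ : Fin N) {r : ℝ}
    (hr : 0 < r) : 0 ≤ deriv (fun t : ℝ => w (t • EuclideanSpace.single i₀ 1)) r :=
  deriv_nonneg_of_radialLaplacian_nonneg (by omega)
    (hw.comp (contDiff_id.smul contDiff_const)).differentiable_deriv_two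
    (fun _ hr => lap_smul_single_of_radial hw hrad i₀ hr ▸ hlap _) hr

theorem le_of_norm_le_of_lap_nonneg (hN : 2 ≤ N) (hw : ContDiff ℝ 2 w)
    (hrad : ∀ x y, ‖x‖ = ‖y‖ → w x = w y) (hlap : ∀ x, 0 ≤ lap w x)
    {x y : EuclideanSpace ℝ (Fin N)} (hxy : ‖x‖ ≤ ‖y‖) : w x ≤ w y := by
  let i₀ : Fin N := ⟨0, by omega⟩
  have hg : ContDiff ℝ 2 fun t : ℝ => w (t • EuclideanSpace.single i₀ 1) :=
    hw.comp (contDiff_id.smul contDiff_const)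
  have hmono := monotoneOn_of_deriv_nonneg (convex_Ici 0) hg.continuous.continuousOn
    (hg.differentiable two_ne_zero).differentiableOn fun r hr =>
      deriv_nonneg_of_lap_nonneg hN hw hrad hlap i₀ (by rwa [interior_Ici] at hr)
  rw [apply_eq_apply_norm_smul_single hrad i₀ x, apply_eq_apply_norm_smul_single hrad i₀ y]
  exact hmono (norm_nonneg x) (norm_nonneg y) hxy

theorem integrableOn_Ioi_mul_of_le_lap (hN : 2 ≤ N) (hw : ContDiff ℝ 2 w)
    (hrad : ∀ x y, ‖x‖ = ‖y‖ → w x = w y) {M : ℝ} (hM : ∀ x, w x ≤ M)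
    (hlap : ∀ x, 0 ≤ lap w x) {q : ℝ → ℝ} {a ε : ℝ} (ha : 0 < a) (hε : 0 < ε)
    (hq : ∀ r, a ≤ r → 0 ≤ q r) (hmono : MonotoneOn (fun r => r ^ (2 * N - 2) * q r) (Ici a))
    (hq_le : ∀ x, a ≤ ‖x‖ → ε * q ‖x‖ ≤ lap w x) :
    IntegrableOn (fun s => s * q s) (Ioi a) := by
  let i₀ : Fin N := ⟨0, by omega⟩
  have hnorm (r : ℝ) (hr : 0 ≤ r) : ‖r • EuclideanSpace.single i₀ (1 : ℝ)‖ = r := by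
    simp [norm_smul, hr]
  refine integrableOn_Ioi_mul_of_le_radialLaplacian (n := N - 1)
    (g := fun t => w (t • EuclideanSpace.single i₀ 1)) ha hε
    (hw.comp (contDiff_id.smul contDiff_const)) (fun t => hM _)
    (fun r hr => deriv_nonneg_of_lap_nonneg hN hw hrad hlap i₀ (ha.trans_le hr)) hq
    (by rwa [show 2 * (N - 1) = 2 * N - 2 by omega]) fun r hr => ?_
  have hr0 : 0 < r := ha.trans_le hr
  have h := hq_le (r • EuclideanSpace.single i₀ 1) (by rwa [hnorm r hr0.le])
  rwa [hnorm r hr0.le, lap_smul_single_of_radial hw hrad i₀ hr0] at h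

end Radial

theorem continuous_of_forall_exists_holderOnWith {X Y : Type*} [PseudoEMetricSpace X]
    [PseudoEMetricSpace Y] {f : X → Y} {α : NNReal} (hα : 0 < α)
    (hf : ∀ x, ∃ C : NNReal, ∃ s ∈ nhds x, HolderOnWith C α f s) : Continuous f :=
  continuous_iff_continuousAt.2 fun x => by
    obtain ⟨C, s, hs, hfs⟩ := hf x
    exact (hfs.continuousOn hα).continuousAt hs

open scoped Pointwise in
theorem continuousOn_of_isLeast_image_sphere {E : Type*} [NormedAddCommGroup E]
    [NormedSpace ℝ E] [ProperSpace E] [Nontrivial E] {p : E → ℝ} (hp : Continuous p)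
    {ψ : ℝ → ℝ} (hψ : ∀ t ≥ (0 : ℝ), IsLeast (p '' {x | ‖x‖ = t}) (ψ t)) :
    ContinuousOn ψ (Ici 0) := by
  have hcont : Continuous fun t : ℝ => sInf ((fun ω => p (t • ω)) '' Metric.sphere (0 : E) 1) :=
    (isCompact_sphere 0 1).continuous_sInf (hp.comp continuous_smul)
  refine hcont.continuousOn.congr fun t (ht : 0 ≤ t) => ?_
  have hsphere : {x : E | ‖x‖ = t} = t • Metric.sphere (0 : E) 1 := by
    rw [smul_sphere t 0 zero_le_one, smul_zero, mul_one, Real.norm_of_nonneg ht]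
    ext x
    simp
  rw [← (hψ t ht).csInf_eq, hsphere, ← Set.image_smul, Set.image_image]

theorem exists_pos_forall_le_of_le_apply {ι : Type*} [Finite ι] [DecidableEq ι]
    {f : ι → (ι → ℝ) → ℝ}
    (hfpos : ∀ j v, (∀ i, 0 ≤ v i) → (∃ i, 0 < v i) → 0 < f j v)
    (hmono : ∀ j v w, (∀ i, 0 ≤ v i) → (∀ i, v i ≤ w i) → f j v ≤ f j w)
    (i₀ : ι) {c : ℝ} (hc : 0 < c) :
    ∃ ε > 0, ∀ v : ι → ℝ, (∀ i, 0 ≤ v i) → c ≤ v i₀ → ∀ j, ε ≤ f j v := by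
  have hsingle : 0 ≤ (Pi.single i₀ c : ι → ℝ) := Pi.single_nonneg.2 hc.le
  have : Nonempty ι := ⟨i₀⟩
  obtain ⟨j₀, hj₀⟩ := Finite.exists_min fun j => f j (Pi.single i₀ c)
  refine ⟨_, hfpos j₀ _ hsingle ⟨i₀, by simpa⟩, fun v hv hcv j =>
    (hj₀ j).trans (hmono j _ _ hsingle fun i => ?_)⟩
  rcases eq_or_ne i i₀ with rfl | hi
  · simpa
  · simpa [hi] using hv i

theorem mul_sum_le_lap_sum {N : ℕ} {ι : Type*} [Fintype ι]
    {p : ι → EuclideanSpace ℝ (Fin N) → ℝ} {f : ι → (ι → ℝ) → ℝ}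
    {u : ι → EuclideanSpace ℝ (Fin N) → ℝ} {ψ : ι → ℝ → ℝ} (hp_nonneg : ∀ j x, 0 ≤ p j x)
    (hψ : ∀ j, ∀ t ≥ (0 : ℝ), IsLeast (p j '' {x | ‖x‖ = t}) (ψ j t))
    (hu : ∀ i, ContDiff ℝ 2 (u i)) (hu_lap : ∀ i x, lap (u i) x = p i x * f i fun j => u j x)
    {ε : ℝ} (hε : 0 ≤ ε) {x : EuclideanSpace ℝ (Fin N)} (hf : ∀ j, ε ≤ f j fun k => u k x) :
    ε * ∑ j, ψ j ‖x‖ ≤ lap (fun y => ∑ i, u i y) x := by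
  rw [lap_fun_sum fun i _ => hu i, Finset.mul_sum]
  refine Finset.sum_le_sum fun j _ => ?_
  rw [hu_lap, mul_comm]
  exact mul_le_mul ((hψ j _ (norm_nonneg x)).2 ⟨x, rfl, rfl⟩) (hf j) hε (hp_nonneg j x)

theorem stmt1_general
    (N d : ℕ) (hN : 3 ≤ N)
    (p : Fin d → EuclideanSpace ℝ (Fin N) → ℝ)
    (f : Fin d → (Fin d → ℝ) → ℝ)
    -- (P1)
    (α : NNReal) (hα : 0 < α ∧ α < 1)
    (hp_nonneg : ∀ j x, 0 ≤ p j x)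
    (hP1 : ∀ j x, ∃ C : NNReal, ∃ s ∈ nhds x, HolderOnWith C α (p j) s)
    -- (C1)
    (hf_nonneg : ∀ j v, (∀ i, 0 ≤ v i) → 0 ≤ f j v)
    (hfpos : ∀ j v, (∀ i, 0 ≤ v i) → (∃ i, 0 < v i) → 0 < f j v)
    -- (C2)
    (hC2 : ∀ j v w, (∀ i, 0 ≤ v i) → (∀ i, v i ≤ w i) → f j v ≤ f j w)
    -- ψ j t = min_{|x| = t} p j x
    (ψ : Fin d → ℝ → ℝ)
    (hψ : ∀ j, ∀ t ≥ (0:ℝ), IsLeast (p j '' {x | ‖x‖ = t}) (ψ j t))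
    -- ∫₀^∞ t Σⱼ ψⱼ(t) dt = ∞
    (hdiv : ¬ IntegrableOn (fun t : ℝ => t * ∑ j, ψ j t) (Ioi 0))
    -- r ↦ r^{2N-2} Σⱼ ψⱼ(r) is nondecreasing for large r
    (R₀ : ℝ)
    (hmono : MonotoneOn (fun r : ℝ => r ^ (2 * N - 2) * ∑ j, ψ j r) (Ici R₀)) :
    -- conclusion: no nonnegative nontrivial entire bounded radial solution exists
    ¬ ∃ u : Fin d → EuclideanSpace ℝ (Fin N) → ℝ,
      (∀ i, ContDiff ℝ 2 (u i)) ∧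
      (∀ i x, 0 ≤ u i x) ∧
      (∃ i x, u i x ≠ 0) ∧
      (∀ i, ∃ M : ℝ, ∀ x, |u i x| ≤ M) ∧
      (∀ i x y, ‖x‖ = ‖y‖ → u i x = u i y) ∧
      (∀ i x, lap (u i) x = p i x * f i (fun j => u j x)) := by
  rintro ⟨u, hu, hu_nonneg, ⟨i₀, x₀, hx₀⟩, hu_bdd, hu_rad, hu_lap⟩
  choose M hM using hu_bdd
  have hf_u (x) : ∀ j, 0 ≤ f j fun k => u k x := fun j => hf_nonneg j _ fun k => hu_nonneg k x
  obtain ⟨ε, hε, hf_ge⟩ := exists_pos_forall_le_of_le_apply hfpos hC2 i₀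
    ((hu_nonneg i₀ x₀).lt_of_ne' hx₀)
  have hu_mono (x) (hx : ‖x₀‖ ≤ ‖x‖) : u i₀ x₀ ≤ u i₀ x :=
    le_of_norm_le_of_lap_nonneg (by omega) (hu i₀) (hu_rad i₀)
      (fun y => hu_lap i₀ y ▸ mul_nonneg (hp_nonneg i₀ y) (hf_u y i₀)) hx
  set a := max (max ‖x₀‖ R₀) 1
  have ha : 0 < a := lt_max_of_lt_right one_pos
  have hx₀a : ‖x₀‖ ≤ a := (le_max_left _ _).trans (le_max_left _ _)
  have hR₀a : R₀ ≤ a := (le_max_right _ _).trans (le_max_left _ _)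
  have hfar : IntegrableOn (fun s => s * ∑ j, ψ j s) (Ioi a) :=
    integrableOn_Ioi_mul_of_le_lap (by omega) (ContDiff.sum fun i _ => hu i)
      (fun x y h => Finset.sum_congr rfl fun i _ => hu_rad i x y h)
      (fun x => Finset.sum_le_sum fun i _ => (le_abs_self _).trans (hM i x))
      (fun x => by simpa using mul_sum_le_lap_sum hp_nonneg hψ hu hu_lap le_rfl (hf_u x)) ha hε
      (fun r hr => Finset.sum_nonneg fun j _ => by
        obtain ⟨x, -, hx⟩ := (hψ j r (ha.le.trans hr)).1
        exact hx ▸ hp_nonneg j x)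
      (hmono.mono (Ici_subset_Ici.2 hR₀a))
      fun x hx => mul_sum_le_lap_sum hp_nonneg hψ hu hu_lap hε.le fun j =>
        hf_ge _ (fun k => hu_nonneg k x) (hu_mono x (hx₀a.trans hx)) j
  have : NeZero N := ⟨by omega⟩
  have hnear : IntegrableOn (fun s => s * ∑ j, ψ j s) (Ioc 0 a) :=
    ((continuousOn_id.mul (continuousOn_finsetSum _ fun j _ => (continuousOn_of_isLeast_image_sphere
      (continuous_of_forall_exists_holderOnWith hα.1 (hP1 j)) (hψ j)).mono Icc_subset_Ici_self)
      ).integrableOn_Icc).mono_set Ioc_subset_Icc_self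
  exact hdiv (Ioc_union_Ioi_eq_Ioi ha.le ▸ hnear.union hfar)

theorem stmt1
    (N d : ℕ) (hN : 3 ≤ N) (hd : 1 ≤ d)
    (p : Fin d → EuclideanSpace ℝ (Fin N) → ℝ)
    (f : Fin d → (Fin d → ℝ) → ℝ)
    -- (P1)
    (α : NNReal) (hα : 0 < α ∧ α < 1)
    (hp_nonneg : ∀ j x, 0 ≤ p j x)
    (hP1 : ∀ j x, ∃ C : NNReal, ∃ s ∈ nhds x, HolderOnWith C α (p j) s)
    -- (C1)
    (hf_nonneg : ∀ j v, (∀ i, 0 ≤ v i) → 0 ≤ f j v)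
    (hC1 : ∀ j, ContDiffOn ℝ 1 (f j) {v : Fin d → ℝ | ∀ i, 0 ≤ v i})
    (hf0 : ∀ j, f j (fun _ => 0) = 0)
    (hfpos : ∀ j v, (∀ i, 0 ≤ v i) → (∃ i, 0 < v i) → 0 < f j v)
    -- (C2)
    (hC2 : ∀ j v w, (∀ i, 0 ≤ v i) → (∀ i, v i ≤ w i) → f j v ≤ f j w)
    -- (C3)
    (hC3 : ¬ IntegrableOn
      (fun s : ℝ => (∫ t in (0:ℝ)..s, ∑ i, f i (fun _ => t)) ^ (-(1/2) : ℝ)) (Ioi 1))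
    -- ψ j t = min_{|x| = t} p j x
    (ψ : Fin d → ℝ → ℝ)
    (hψ : ∀ j, ∀ t ≥ (0:ℝ), IsLeast (p j '' {x | ‖x‖ = t}) (ψ j t))
    -- ∫₀^∞ t Σⱼ ψⱼ(t) dt = ∞
    (hdiv : ¬ IntegrableOn (fun t : ℝ => t * ∑ j, ψ j t) (Ioi 0))
    -- r ↦ r^{2N-2} Σⱼ ψⱼ(r) is nondecreasing for large r
    (R₀ : ℝ)
    (hmono : MonotoneOn (fun r : ℝ => r ^ (2 * N - 2) * ∑ j, ψ j r) (Ici R₀)) :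
    -- conclusion: no nonnegative nontrivial entire bounded radial solution exists
    ¬ ∃ u : Fin d → EuclideanSpace ℝ (Fin N) → ℝ,
      (∀ i, ContDiff ℝ 2 (u i)) ∧
      (∀ i x, 0 ≤ u i x) ∧
      (∃ i x, u i x ≠ 0) ∧
      (∀ i, ∃ M : ℝ, ∀ x, |u i x| ≤ M) ∧
      (∀ i x y, ‖x‖ = ‖y‖ → u i x = u i y) ∧
      (∀ i x, lap (u i) x = p i x * f i (fun j => u j x)) :=
  stmt1_general N d hN p f α hα hp_nonneg hP1 hf_nonneg hfpos hC2 ψ hψ hdiv R₀ hmono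
end

section
/- If f_1,…,f_d satisfy (C1)–(C2) and ∫₁^∞ (Σ_{i=1}^d f_i(s,…,s))^{-1} ds = ∞, then ∫₁^∞ (∫₀^t Σ_{i=1}^d f_i(s,…,s) ds)^{-1/2} dt = ∞. -/
open MeasureTheory Set Filter Topology

/-!
Put `F s = ∑ᵢ fᵢ(s,…,s)` and `G t = ∫₀ᵗ F`. Monotonicity of `F` gives `G t ≤ t F t`. If
`G^{-1/2}` were integrable on `(1, ∞)`, then, being nonincreasing, it would satisfy
`t G(t)^{-1/2} → 0`, i.e. `t < √(G t)` for large `t`; then `G ≤ t F < √G F`, so `1/F < G^{-1/2}`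
eventually and `1/F` would be integrable too.
-/

lemma MonotoneOn.intervalIntegral_le_mul {F : ℝ → ℝ} {a b : ℝ} (hF : MonotoneOn F (Icc a b))
    (hab : a ≤ b) : ∫ s in a..b, F s ≤ (b - a) * F b := by
  calc ∫ s in a..b, F s ≤ ∫ _ in a..b, F b :=
        intervalIntegral.integral_mono_on hab
          (MonotoneOn.intervalIntegrable (by rwa [uIcc_of_le hab])) intervalIntegrable_const
          fun s hs => hF hs (right_mem_Icc.2 hab) hs.2
    _ = (b - a) * F b := by simp

lemma AntitoneOn.mul_le_intervalIntegral {h : ℝ → ℝ} {a b : ℝ} (hh : AntitoneOn h (Icc a b))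
    (hab : a ≤ b) : (b - a) * h b ≤ ∫ s in a..b, h s := by
  calc (b - a) * h b = ∫ _ in a..b, h b := by simp
    _ ≤ ∫ s in a..b, h s :=
        intervalIntegral.integral_mono_on hab intervalIntegrable_const
          (AntitoneOn.intervalIntegrable (by rwa [uIcc_of_le hab]))
          fun s hs => hh hs (right_mem_Icc.2 hab) hs.2

lemma AntitoneOn.tendsto_mul_atTop_zero_of_integrableOn {h : ℝ → ℝ} {a : ℝ}
    (hanti : AntitoneOn h (Ioi a)) (hnonneg : ∀ t ∈ Ioi a, 0 ≤ h t)
    (hint : IntegrableOn h (Ioi a)) :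
    Tendsto (fun t => t * h t) atTop (𝓝 0) := by
  have hii : ∀ b c, a ≤ b → b ≤ c → IntervalIntegrable h volume b c := fun b c hb hbc =>
    (intervalIntegrable_iff_integrableOn_Ioc_of_le hbc).2
      (hint.mono_set (Ioc_subset_Ioi_self.trans (Ioi_subset_Ioi hb)))
  -- `t h t ≤ 2 ∫_{t/2}^t h`, and the right side is a difference of two integrals over `(a, ·]`
  -- that both converge to `∫_{(a, ∞)} h`.
  have hlim := intervalIntegral_tendsto_integral_Ioi a hint tendsto_id
  have htail : Tendsto (fun t => 2 * ∫ x in (t / 2)..t, h x) atTop (𝓝 0) := by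
    have := (hlim.sub (hlim.comp (tendsto_id.atTop_div_const two_pos))).const_mul 2
    rw [sub_self, mul_zero] at this
    refine this.congr' ?_
    filter_upwards [eventually_ge_atTop (2 * a), eventually_ge_atTop 0] with t hta ht0
    simp only [Function.comp_apply, id]
    rw [intervalIntegral.integral_interval_sub_left (hii a t le_rfl (by linarith))
      (hii a (t / 2) le_rfl (by linarith))]
  refine tendsto_of_tendsto_of_tendsto_of_le_of_le' tendsto_const_nhds htail ?_ ?_
  · filter_upwards [eventually_gt_atTop a, eventually_ge_atTop 0] with t hta ht0
    exact mul_nonneg ht0 (hnonneg t hta)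
  · filter_upwards [eventually_gt_atTop (2 * a), eventually_ge_atTop 0] with t hta ht0
    have := (hanti.mono fun x hx => show a < x by linarith [hx.1]).mul_le_intervalIntegral
      (show t / 2 ≤ t by linarith)
    linarith

lemma AntitoneOn.integrableOn_Ioi_of_eventually_norm_le {g h : ℝ → ℝ} {a : ℝ}
    (hg : AntitoneOn g (Ici a)) (hh : IntegrableOn h (Ioi a))
    (hle : ∀ᶠ t in atTop, ‖g t‖ ≤ h t) : IntegrableOn g (Ioi a) := by
  have hloc : LocallyIntegrableOn g (Ici a) :=
    (locallyIntegrableOn_iff isClosed_Ici.isLocallyClosed).2 fun k hk hkc =>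
      (hg.mono hk).integrableOn_isCompact hkc
  exact (hloc.integrableOn_of_isBigO_atTop (Asymptotics.IsBigO.of_norm_eventuallyLE hle)
    ⟨Ioi a, Ioi_mem_atTop a, hh⟩).mono_set Ioi_subset_Ici_self

lemma inv_le_rpow_neg_half {t F G : ℝ} (hF : 0 < F) (hG : 0 < G) (hGF : G ≤ t * F)
    (ht : t * G ^ (-(1 / 2) : ℝ) < 1) : F⁻¹ ≤ G ^ (-(1 / 2) : ℝ) := by
  have hs : 0 < √G := Real.sqrt_pos.2 hG
  rw [show G ^ (-(1 / 2) : ℝ) = (√G)⁻¹ by rw [Real.sqrt_eq_rpow, Real.rpow_neg hG.le]] at ht ⊢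
  have htG : t < √G := by rwa [← div_eq_mul_inv, div_lt_one hs] at ht
  -- `√G * √G = G ≤ t * F < √G * F`
  have hGF' : √G < F := by
    have := Real.mul_self_sqrt hG.le
    nlinarith
  exact inv_anti₀ hs hGF'.le

theorem not_integrableOn_rpow_neg_half_intervalIntegral {F : ℝ → ℝ}
    (hmono : MonotoneOn F (Ici 0)) (hpos : ∀ s, 0 < s → 0 < F s)
    (hdiv : ¬ IntegrableOn (fun s => (F s)⁻¹) (Ioi 1)) :
    ¬ IntegrableOn (fun t => (∫ s in (0 : ℝ)..t, F s) ^ (-(1 / 2) : ℝ)) (Ioi 1) := by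
  intro hint
  set G : ℝ → ℝ := fun t => ∫ s in (0 : ℝ)..t, F s
  have hFii : ∀ t, 0 ≤ t → IntervalIntegrable F volume 0 t := fun t ht =>
    MonotoneOn.intervalIntegrable (hmono.mono (by rw [uIcc_of_le ht]; exact Icc_subset_Ici_self))
  have hGpos : ∀ t, 0 < t → 0 < G t := fun t ht =>
    intervalIntegral.intervalIntegral_pos_of_pos_on (hFii t ht.le) (fun s hs => hpos s hs.1) ht
  have hGmono : MonotoneOn G (Ici 0) := fun s hs t _ hst =>
    intervalIntegral.integral_mono_interval le_rfl hs hst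
      ((ae_restrict_iff' measurableSet_Ioc).2 (.of_forall fun x hx => (hpos x hx.1).le))
      (hFii t (le_trans hs hst))
  have hGle : ∀ t, 0 ≤ t → G t ≤ t * F t := fun t ht => by
    simpa using (hmono.mono Icc_subset_Ici_self).intervalIntegral_le_mul ht
  have hanti : AntitoneOn (fun t => G t ^ (-(1 / 2) : ℝ)) (Ioi 1) := fun s hs t ht hst =>
    Real.rpow_le_rpow_of_nonpos (hGpos s (one_pos.trans hs))
      (hGmono (mem_Ici.2 (zero_le_one.trans hs.le)) (mem_Ici.2 (zero_le_one.trans ht.le)) hst)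
      (by norm_num)
  have hsmall : ∀ᶠ t in atTop, t * G t ^ (-(1 / 2) : ℝ) < 1 :=
    (hanti.tendsto_mul_atTop_zero_of_integrableOn
      (fun t ht => Real.rpow_nonneg (hGpos t (one_pos.trans ht)).le _) hint).eventually
      (eventually_lt_nhds one_pos)
  have hFinv : AntitoneOn (fun s => (F s)⁻¹) (Ici 1) := fun s hs t ht hst =>
    inv_anti₀ (hpos s (one_pos.trans_le hs))
      (hmono (mem_Ici.2 (zero_le_one.trans hs)) (mem_Ici.2 (zero_le_one.trans ht)) hst)
  refine hdiv (hFinv.integrableOn_Ioi_of_eventually_norm_le hint ?_)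
  filter_upwards [hsmall, eventually_gt_atTop 0] with t ht ht0
  rw [Real.norm_of_nonneg (inv_nonneg.2 (hpos t ht0).le)]
  exact inv_le_rpow_neg_half (hpos t ht0) (hGpos t ht0) (hGle t ht0.le) ht

theorem stmt7_general
    (d : ℕ) (hd : 1 ≤ d)
    (f : Fin d → (Fin d → ℝ) → ℝ)
    -- (C1)
    (hfpos : ∀ j v, (∀ i, 0 ≤ v i) → (∃ i, 0 < v i) → 0 < f j v)
    -- (C2)
    (hC2 : ∀ j v w, (∀ i, 0 ≤ v i) → (∀ i, v i ≤ w i) → f j v ≤ f j w)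
    -- ∫₁^∞ (Σᵢ fᵢ(s,…,s))⁻¹ ds = ∞
    (hdiv : ¬ IntegrableOn (fun s : ℝ => (∑ i, f i (fun _ => s))⁻¹) (Ioi 1)) :
    -- conclusion: ∫₁^∞ (∫₀^t Σᵢ fᵢ(s,…,s) ds)^{-1/2} dt = ∞
    ¬ IntegrableOn
      (fun t : ℝ => (∫ s in (0:ℝ)..t, ∑ i, f i (fun _ => s)) ^ (-(1/2) : ℝ)) (Ioi 1) := by
  have : Nonempty (Fin d) := Fin.pos_iff_nonempty.mp hd
  refine not_integrableOn_rpow_neg_half_intervalIntegral (fun s hs t _ hst => ?_)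
    (fun s hs => ?_) hdiv
  · exact Finset.sum_le_sum fun j _ => hC2 j _ _ (fun _ => hs) fun _ => hst
  · exact Finset.sum_pos (fun j _ => hfpos j _ (fun _ => hs.le) ⟨Classical.arbitrary _, hs⟩)
      Finset.univ_nonempty

theorem stmt7
    (d : ℕ) (hd : 1 ≤ d)
    (f : Fin d → (Fin d → ℝ) → ℝ)
    -- (C1)
    (hf_nonneg : ∀ j v, (∀ i, 0 ≤ v i) → 0 ≤ f j v)
    (hC1 : ∀ j, ContDiffOn ℝ 1 (f j) {v : Fin d → ℝ | ∀ i, 0 ≤ v i})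
    (hf0 : ∀ j, f j (fun _ => 0) = 0)
    (hfpos : ∀ j v, (∀ i, 0 ≤ v i) → (∃ i, 0 < v i) → 0 < f j v)
    -- (C2)
    (hC2 : ∀ j v w, (∀ i, 0 ≤ v i) → (∀ i, v i ≤ w i) → f j v ≤ f j w)
    -- ∫₁^∞ (Σᵢ fᵢ(s,…,s))⁻¹ ds = ∞
    (hdiv : ¬ IntegrableOn (fun s : ℝ => (∑ i, f i (fun _ => s))⁻¹) (Ioi 1)) :
    -- conclusion: ∫₁^∞ (∫₀^t Σᵢ fᵢ(s,…,s) ds)^{-1/2} dt = ∞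
    ¬ IntegrableOn
      (fun t : ℝ => (∫ s in (0:ℝ)..t, ∑ i, f i (fun _ => s)) ^ (-(1/2) : ℝ)) (Ioi 1) :=
  stmt7_general d hd f hfpos hC2 hdiv
end

section
/- Suppose (C1)–(C2) hold, φ_1,…,φ_d : [0,∞) → [0,∞) are continuous, R > 0, and set φ_i^R = max{φ_i(r) : 0 ≤ r ≤ R}. Let {w_i^k} be the successive approximations defined by w_i^0 ≡ 1/d and w_i^k(r) = 1/d + ∫₀^r t^{1-N} ∫₀^t s^{N-1} φ_i(s) f_i(w_1^{k-1}(s),…,w_d^{k-1}(s)) ds dt. Then for every k ≥ 1 and every 0 ≤ r ≤ R one has [(Σ_{i=1}^d w_i^k)'(r)]² ≤ 2 (Σ_{i=1}^d φ_i^R) ∫₁^{Σ_{i=1}^d w_i^k(r)} Σ_{i=1}^d f_i(s,…,s) ds. -/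
/-!
Put `W = ∑ᵢ wᵢᵏ` and `h = W'`. Each `wᵢᵏ` solves `(r^(N-1) wᵢ')' = r^(N-1) φᵢ fᵢ(wᵏ⁻¹)` with
`wᵢ'(0) = 0`, so `wᵢ'' = φᵢ fᵢ(wᵏ⁻¹) - (N-1)/r · wᵢ' ≤ φᵢ fᵢ(wᵏ⁻¹)`. By induction on `k` the
iterates are continuous, at least `1/d`, and increasing in `k` (this is where (C2) enters), so
`wⱼᵏ⁻¹ ≤ wⱼᵏ ≤ W` and on `[0, R]` we get `h' ≤ A p(W)` with `A = ∑ φᵢᴿ` and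
`p(s) = ∑ᵢ fᵢ(s,…,s)`. Then `E = 2A ∫₀ʳ p(W) W' - h²` satisfies `E(0) = 0` and
`E' = 2h (A p(W) - h') ≥ 0`, hence `h(r)² ≤ 2A ∫₀ʳ p(W) W' = 2A ∫₁^{W(r)} p`.
-/

open MeasureTheory Set Filter Topology

theorem Finset.sum_mul_le_sum_mul_sum {ι R : Type*} [Semiring R] [PartialOrder R]
    [IsOrderedRing R] (s : Finset ι) {a b : ι → R}
    (ha : ∀ i ∈ s, 0 ≤ a i) (hb : ∀ i ∈ s, 0 ≤ b i) :
    ∑ i ∈ s, a i * b i ≤ (∑ i ∈ s, a i) * ∑ i ∈ s, b i := by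
  rw [Finset.sum_mul]
  exact Finset.sum_le_sum fun i hi =>
    mul_le_mul_of_nonneg_left (Finset.single_le_sum hb hi) (ha i hi)

theorem ContinuousOn.intervalIntegrable_of_Ici {g : ℝ → ℝ} {a r : ℝ} (hg : ContinuousOn g (Ici a))
    (hr : a ≤ r) : IntervalIntegrable g volume a r :=
  (hg.mono (by rw [uIcc_of_le hr]; exact Icc_subset_Ici_self)).intervalIntegrable

theorem hasDerivWithinAt_integral_Ici {g : ℝ → ℝ} {a r : ℝ} (hg : ContinuousOn g (Ici a))
    (hr : a ≤ r) : HasDerivWithinAt (fun ρ => ∫ t in a..ρ, g t) (g r) (Ici a) r := by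
  have hint := hg.intervalIntegrable_of_Ici hr
  rcases hr.eq_or_lt with rfl | hr
  · exact intervalIntegral.integral_hasDerivWithinAt_right hint
      ((hg.stronglyMeasurableAtFilter_nhdsWithin measurableSet_Ici a).filter_mono
        (nhdsWithin_mono _ Ioi_subset_Ici_self))
      ((hg a self_mem_Ici).mono Ioi_subset_Ici_self)
  · exact (intervalIntegral.integral_hasDerivAt_right hint
      ((hg.mono Ioi_subset_Ici_self).stronglyMeasurableAtFilter isOpen_Ioi r hr)
      (hg.continuousAt (Ici_mem_nhds hr))).hasDerivWithinAt

theorem deriv_eq_zero_of_hasDerivWithinAt_Ici {F : Type*} [NormedAddCommGroup F]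
    [NormedSpace ℝ F] {f : ℝ → F} {x : ℝ}
    (hf : HasDerivWithinAt f 0 (Ici x) x) : deriv f x = 0 := by
  by_cases hd : DifferentiableAt ℝ f x
  · rw [← hd.derivWithin (uniqueDiffWithinAt_Ici x), hf.derivWithin (uniqueDiffWithinAt_Ici x)]
  · exact deriv_zero_of_not_differentiableAt hd

/-- `w' = radialGradient n G` solves `(rⁿ w')' = rⁿ G` with `w'(0) = 0`; for `n = N - 1` this is
`Δw = G` for radial `w` on `ℝᴺ`. -/
noncomputable def radialGradient (n : ℕ) (G : ℝ → ℝ) (t : ℝ) : ℝ :=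
  (∫ s in (0:ℝ)..t, s ^ n * G s) / t ^ n

section RadialGradient

variable {n : ℕ} {G G₁ G₂ : ℝ → ℝ} {t : ℝ}

@[simp]
theorem radialGradient_zero : radialGradient n G 0 = 0 := by
  simp [radialGradient]

theorem radialGradient_nonneg (hG : ∀ s ≥ (0:ℝ), 0 ≤ G s) (ht : 0 ≤ t) :
    0 ≤ radialGradient n G t :=
  div_nonneg (intervalIntegral.integral_nonneg ht fun s hs => mul_nonneg (pow_nonneg hs.1 n)
    (hG s hs.1)) (pow_nonneg ht n)

theorem radialGradient_mono (hG₁ : ContinuousOn G₁ (Ici 0)) (hG₂ : ContinuousOn G₂ (Ici 0))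
    (hle : ∀ s ≥ (0:ℝ), G₁ s ≤ G₂ s) (ht : 0 ≤ t) :
    radialGradient n G₁ t ≤ radialGradient n G₂ t := by
  refine div_le_div_of_nonneg_right ?_ (pow_nonneg ht n)
  exact intervalIntegral.integral_mono_on ht
    (((continuous_pow n).continuousOn.mul hG₁ :
      ContinuousOn (fun s => s ^ n * G₁ s) _).intervalIntegrable_of_Ici ht)
    (((continuous_pow n).continuousOn.mul hG₂ :
      ContinuousOn (fun s => s ^ n * G₂ s) _).intervalIntegrable_of_Ici ht)
    fun s hs => mul_le_mul_of_nonneg_left (hle s hs.1) (pow_nonneg hs.1 n)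

theorem norm_radialGradient_le {C : ℝ} (hC : ∀ s ∈ Icc 0 t, ‖G s‖ ≤ C) (ht : 0 < t) :
    ‖radialGradient n G t‖ ≤ C * t := by
  have htn := pow_pos ht n
  have hint : ‖∫ s in (0:ℝ)..t, s ^ n * G s‖ ≤ t ^ n * C * |t - 0| := by
    refine intervalIntegral.norm_integral_le_of_norm_le_const fun s hs => ?_
    rw [uIoc_of_le ht.le] at hs
    rw [norm_mul, norm_pow, Real.norm_of_nonneg hs.1.le]
    exact mul_le_mul (pow_le_pow_left₀ hs.1.le hs.2 n) (hC s (Ioc_subset_Icc_self hs))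
      (norm_nonneg _) htn.le
  rw [radialGradient, norm_div, norm_pow, Real.norm_of_nonneg ht.le, div_le_iff₀ htn]
  rw [sub_zero, abs_of_pos ht] at hint
  linarith

theorem hasDerivAt_radialGradient (hG : ContinuousOn G (Ici 0)) (ht : 0 < t) :
    HasDerivAt (radialGradient n G) (G t - n / t * radialGradient n G t) t := by
  have hsG : ContinuousOn (fun s => s ^ n * G s) (Ici 0) := (continuous_pow n).continuousOn.mul hG
  have hnum := (hasDerivWithinAt_integral_Ici hsG ht.le).hasDerivAt (Ici_mem_nhds ht)
  refine (hnum.fun_div (hasDerivAt_pow n t) (pow_ne_zero n ht.ne')).congr_deriv ?_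
  rcases n with _ | n
  · simp [radialGradient]
  · simp only [radialGradient, Nat.add_sub_cancel]
    field_simp
    ring

theorem continuousOn_radialGradient (hG : ContinuousOn G (Ici 0)) :
    ContinuousOn (radialGradient n G) (Ici 0) := by
  intro t ht
  rcases (mem_Ici.1 ht).eq_or_lt with rfl | ht
  · obtain ⟨C, hC⟩ := (isCompact_Icc (a := (0:ℝ)) (b := 1)).exists_bound_of_continuousOn
      (hG.mono Icc_subset_Ici_self)
    have hbound : ∀ t ∈ Ico (0:ℝ) 1, ‖radialGradient n G t‖ ≤ C * t := by
      rintro t ⟨ht0, ht1⟩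
      rcases ht0.eq_or_lt with rfl | ht0
      · simp
      · exact norm_radialGradient_le (fun s hs => hC s ⟨hs.1, hs.2.trans ht1.le⟩) ht0
    rw [ContinuousWithinAt, radialGradient_zero]
    refine squeeze_zero_norm' (eventually_of_mem (Ico_mem_nhdsGE zero_lt_one) hbound) ?_
    exact tendsto_nhdsWithin_of_tendsto_nhds (by simpa using (continuous_const_mul C).tendsto 0)
  · exact (hasDerivAt_radialGradient hG ht).continuousAt.continuousWithinAt

end RadialGradient

theorem sq_le_two_mul_integral_of_hasDerivAt {W h h' p : ℝ → ℝ} {a b : ℝ} (hab : a ≤ b)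
    (hW : ContinuousOn W (Icc a b)) (hWd : ∀ t ∈ Ioo a b, HasDerivAt W (h t) t)
    (hh : ContinuousOn h (Icc a b)) (hha : h a = 0) (hh_nonneg : ∀ t ∈ Ioo a b, 0 ≤ h t)
    (hhd : ∀ t ∈ Ioo a b, HasDerivAt h (h' t) t) (hh' : ∀ t ∈ Ioo a b, h' t ≤ p (W t))
    (hp : ContinuousOn p (W '' Icc a b)) :
    h b ^ 2 ≤ 2 * ∫ u in W a..W b, p u := by
  have hq : ContinuousOn (fun s => p (W s) * h s) (Icc a b) :=
    (hp.comp hW (mapsTo_image _ _)).mul hh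
  have hE : MonotoneOn (fun t => 2 * (∫ s in a..t, p (W s) * h s) - h t ^ 2) (Icc a b) := by
    refine monotoneOn_of_hasDerivWithinAt_nonneg (convex_Icc a b)
      (f' := fun t => 2 * (p (W t) * h t) - 2 * h t * h' t) ?_ (fun t ht => ?_) (fun t ht => ?_)
    · refine (continuousOn_const.mul ?_).sub (hh.pow 2)
      simpa [uIcc_of_le hab] using intervalIntegral.continuousOn_primitive_interval
        (hq.integrableOn_Icc.mono_set (uIcc_of_le hab).subset)
    · rw [interior_Icc] at ht ⊢
      have hprim := intervalIntegral.integral_hasDerivAt_right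
        ((hq.mono (Icc_subset_Icc_right ht.2.le)).intervalIntegrable_of_Icc ht.1.le)
        ((hq.mono Ioo_subset_Icc_self).stronglyMeasurableAtFilter isOpen_Ioo t ht)
        (hq.continuousAt (Icc_mem_nhds ht.1 ht.2))
      refine ((hprim.const_mul 2).fun_sub ((hhd t ht).fun_pow 2)).hasDerivWithinAt.congr_deriv ?_
      norm_num
    · rw [interior_Icc] at ht
      nlinarith [hh' t ht, hh_nonneg t ht]
  have hsubst : ∫ s in a..b, p (W s) * h s = ∫ u in W a..W b, p u :=
    intervalIntegral.integral_comp_mul_deriv'' (by rwa [uIcc_of_le hab])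
      (fun t ht => (hWd t (by rwa [min_eq_left hab, max_eq_right hab] at ht)).hasDerivWithinAt)
      (by rwa [uIcc_of_le hab]) (by rwa [uIcc_of_le hab])
  have := hE (left_mem_Icc.2 hab) (right_mem_Icc.2 hab) hab
  simp only [intervalIntegral.integral_same, hha] at this
  linarith

noncomputable def reaction {d : ℕ} (φ : Fin d → ℝ → ℝ) (f : Fin d → (Fin d → ℝ) → ℝ)
    (u : Fin d → ℝ → ℝ) (i : Fin d) (s : ℝ) : ℝ :=
  φ i s * f i (fun j => u j s)

structure IsRadialIteration {d : ℕ} (n : ℕ) (c : ℝ) (φ : Fin d → ℝ → ℝ)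
    (f : Fin d → (Fin d → ℝ) → ℝ) (w : ℕ → Fin d → ℝ → ℝ) : Prop where
  const_nonneg : 0 ≤ c
  f_nonneg : ∀ j v, (∀ i, 0 ≤ v i) → 0 ≤ f j v
  f_continuousOn : ∀ j, ContinuousOn (f j) {v : Fin d → ℝ | ∀ i, 0 ≤ v i}
  f_mono : ∀ j v v', (∀ i, 0 ≤ v i) → (∀ i, v i ≤ v' i) → f j v ≤ f j v'
  φ_continuousOn : ∀ i, ContinuousOn (φ i) (Ici 0)
  φ_nonneg : ∀ i, ∀ t ≥ (0:ℝ), 0 ≤ φ i t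
  zero : ∀ i r, w 0 i r = c
  succ : ∀ k i r, 0 ≤ r →
    w (k + 1) i r = c + ∫ t in (0:ℝ)..r, radialGradient n (reaction φ f (w k) i) t

namespace IsRadialIteration

variable {d n : ℕ} {c : ℝ} {φ : Fin d → ℝ → ℝ} {f : Fin d → (Fin d → ℝ) → ℝ}
  {w : ℕ → Fin d → ℝ → ℝ}

theorem reaction_nonneg (hw : IsRadialIteration n c φ f w) {u : Fin d → ℝ → ℝ}
    (hu : ∀ j, ∀ s ≥ (0:ℝ), 0 ≤ u j s) (i : Fin d) {s : ℝ} (hs : 0 ≤ s) :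
    0 ≤ reaction φ f u i s :=
  mul_nonneg (hw.φ_nonneg i s hs) (hw.f_nonneg i _ fun j => hu j s hs)

theorem continuousOn_reaction (hw : IsRadialIteration n c φ f w) {u : Fin d → ℝ → ℝ}
    (hu : ∀ j, ContinuousOn (u j) (Ici 0)) (hu0 : ∀ j, ∀ s ≥ (0:ℝ), 0 ≤ u j s) (i : Fin d) :
    ContinuousOn (reaction φ f u i) (Ici 0) :=
  (hw.φ_continuousOn i).mul
    ((hw.f_continuousOn i).comp (continuousOn_pi.2 hu) fun s hs j => hu0 j s hs)

theorem hasDerivWithinAt_succ_of_continuousOn (hw : IsRadialIteration n c φ f w) {k : ℕ}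
    {i : Fin d} (hG : ContinuousOn (reaction φ f (w k) i) (Ici 0)) {r : ℝ} (hr : 0 ≤ r) :
    HasDerivWithinAt (w (k + 1) i) (radialGradient n (reaction φ f (w k) i) r) (Ici 0) r :=
  ((hasDerivWithinAt_integral_Ici (continuousOn_radialGradient hG) hr).const_add c).congr
    (fun ρ hρ => hw.succ k i ρ hρ) (hw.succ k i r hr)

theorem continuousOn_and_const_le (hw : IsRadialIteration n c φ f w) (k : ℕ) :
    (∀ i, ContinuousOn (w k i) (Ici 0)) ∧ ∀ i, ∀ r ≥ (0:ℝ), c ≤ w k i r := by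
  induction k with
  | zero =>
    exact ⟨fun i => continuousOn_const.congr fun r _ => hw.zero i r,
      fun i r _ => (hw.zero i r).ge⟩
  | succ k ih =>
    have hu0 : ∀ j, ∀ s ≥ (0:ℝ), 0 ≤ w k j s := fun j s hs => hw.const_nonneg.trans (ih.2 j s hs)
    refine ⟨fun i r hr =>
      (hw.hasDerivWithinAt_succ_of_continuousOn (hw.continuousOn_reaction ih.1 hu0 i)
        hr).continuousWithinAt, fun i r hr => ?_⟩
    rw [hw.succ k i r hr]
    exact le_add_of_nonneg_right (intervalIntegral.integral_nonneg hr fun t ht =>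
      radialGradient_nonneg (fun s hs => hw.reaction_nonneg hu0 i hs) ht.1)

theorem iterate_nonneg (hw : IsRadialIteration n c φ f w) (k : ℕ) :
    ∀ j, ∀ s ≥ (0:ℝ), 0 ≤ w k j s :=
  fun j s hs => hw.const_nonneg.trans ((hw.continuousOn_and_const_le k).2 j s hs)

theorem continuousOn_reaction_iterate (hw : IsRadialIteration n c φ f w) (k : ℕ) (i : Fin d) :
    ContinuousOn (reaction φ f (w k) i) (Ici 0) :=
  hw.continuousOn_reaction (hw.continuousOn_and_const_le k).1 (hw.iterate_nonneg k) i

theorem hasDerivWithinAt_succ (hw : IsRadialIteration n c φ f w) (k : ℕ) (i : Fin d) {r : ℝ}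
    (hr : 0 ≤ r) :
    HasDerivWithinAt (w (k + 1) i) (radialGradient n (reaction φ f (w k) i) r) (Ici 0) r :=
  hw.hasDerivWithinAt_succ_of_continuousOn (hw.continuousOn_reaction_iterate k i) hr

theorem le_succ (hw : IsRadialIteration n c φ f w) (k : ℕ) :
    ∀ i, ∀ r ≥ (0:ℝ), w k i r ≤ w (k + 1) i r := by
  induction k with
  | zero => exact fun i r hr => (hw.zero i r).le.trans ((hw.continuousOn_and_const_le 1).2 i r hr)
  | succ k ih =>
    intro i r hr
    rw [hw.succ k i r hr, hw.succ (k + 1) i r hr]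
    have hG := hw.continuousOn_reaction_iterate k i
    have hG' := hw.continuousOn_reaction_iterate (k + 1) i
    refine add_le_add_right (intervalIntegral.integral_mono_on hr
      ((continuousOn_radialGradient hG).intervalIntegrable_of_Ici hr)
      ((continuousOn_radialGradient hG').intervalIntegrable_of_Ici hr)
      fun t ht => radialGradient_mono hG hG' (fun s hs => ?_) ht.1) c
    exact mul_le_mul_of_nonneg_left
      (hw.f_mono i _ _ (fun j => hw.iterate_nonneg k j s hs) fun j => ih j s hs)
      (hw.φ_nonneg i s hs)

theorem hasDerivWithinAt_sum_succ (hw : IsRadialIteration n c φ f w) (k : ℕ) {r : ℝ}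
    (hr : 0 ≤ r) :
    HasDerivWithinAt (fun ρ => ∑ i, w (k + 1) i ρ)
      (∑ i, radialGradient n (reaction φ f (w k) i) r) (Ici 0) r :=
  HasDerivWithinAt.fun_sum fun i _ => hw.hasDerivWithinAt_succ k i hr

theorem deriv_sum_succ (hw : IsRadialIteration n c φ f w) (k : ℕ) {r : ℝ} (hr : 0 ≤ r) :
    deriv (fun ρ => ∑ i, w (k + 1) i ρ) r = ∑ i, radialGradient n (reaction φ f (w k) i) r := by
  rcases hr.eq_or_lt with rfl | hr
  -- the iteration only determines the right derivative at `0`; it vanishes, so the two-sided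
  -- `deriv` is `0` whether or not it exists
  · have h0 := hw.hasDerivWithinAt_sum_succ k le_rfl
    simp only [radialGradient_zero, Finset.sum_const_zero] at h0 ⊢
    exact deriv_eq_zero_of_hasDerivWithinAt_Ici h0
  · exact ((hw.hasDerivWithinAt_sum_succ k hr.le).hasDerivAt (Ici_mem_nhds hr)).deriv

theorem sum_succ_zero (hw : IsRadialIteration n c φ f w) (k : ℕ) :
    ∑ i, w (k + 1) i 0 = d * c := by
  simp [hw.succ k _ 0 le_rfl]

theorem sum_reaction_le (hw : IsRadialIteration n c φ f w) (k : ℕ) {a : Fin d → ℝ} {t : ℝ}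
    (ht : 0 ≤ t) (ha : ∀ i, φ i t ≤ a i) :
    ∑ i, reaction φ f (w k) i t ≤ (∑ i, a i) * ∑ i, f i (fun _ => ∑ j, w (k + 1) j t) := by
  have ha0 i : 0 ≤ a i := (hw.φ_nonneg i t ht).trans (ha i)
  have hW0 : 0 ≤ ∑ j, w (k + 1) j t := Finset.sum_nonneg fun j _ => hw.iterate_nonneg _ j t ht
  have hle_sum j : w k j t ≤ ∑ j, w (k + 1) j t :=
    (hw.le_succ k j t ht).trans
      (Finset.single_le_sum (fun j _ => hw.iterate_nonneg _ j t ht) (Finset.mem_univ j))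
  calc ∑ i, reaction φ f (w k) i t ≤ ∑ i, a i * f i (fun _ => ∑ j, w (k + 1) j t) :=
        Finset.sum_le_sum fun i _ => mul_le_mul (ha i)
          (hw.f_mono i _ _ (fun j => hw.iterate_nonneg k j t ht) hle_sum)
          (hw.f_nonneg i _ fun j => hw.iterate_nonneg k j t ht) (ha0 i)
    _ ≤ _ := Finset.sum_mul_le_sum_mul_sum _ (fun i _ => ha0 i)
        fun i _ => hw.f_nonneg i _ fun _ => hW0

theorem continuousOn_sum_diag (hw : IsRadialIteration n c φ f w) :
    ContinuousOn (fun u => ∑ i, f i fun _ => u) (Ici 0) :=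
  continuousOn_finsetSum _ fun i _ => (hw.f_continuousOn i).comp
    (continuous_pi fun _ => continuous_id).continuousOn fun _ hu _ => hu

theorem sq_deriv_sum_succ_le (hw : IsRadialIteration n c φ f w) (k : ℕ) {R r : ℝ}
    {a : Fin d → ℝ} (ha : ∀ i, ∀ t ∈ Icc 0 R, φ i t ≤ a i) (hr : 0 ≤ r) (hrR : r ≤ R) :
    deriv (fun ρ => ∑ i, w (k + 1) i ρ) r ^ 2 ≤
      2 * (∑ i, a i) * ∫ u in (d * c : ℝ)..∑ i, w (k + 1) i r, ∑ i, f i fun _ => u := by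
  have hG := hw.continuousOn_reaction_iterate k
  have hG0 i : ∀ s ≥ (0:ℝ), 0 ≤ reaction φ f (w k) i s :=
    fun s hs => hw.reaction_nonneg (hw.iterate_nonneg k) i hs
  have key := sq_le_two_mul_integral_of_hasDerivAt (W := fun ρ => ∑ i, w (k + 1) i ρ)
    (p := fun u => (∑ i, a i) * ∑ i, f i fun _ => u) hr
    (fun t ht =>
      (hw.hasDerivWithinAt_sum_succ k ht.1).continuousWithinAt.mono Icc_subset_Ici_self)
    (fun t ht => (hw.hasDerivWithinAt_sum_succ k ht.1.le).hasDerivAt (Ici_mem_nhds ht.1))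
    ((continuousOn_finsetSum _ fun i _ => continuousOn_radialGradient (hG i)).mono
      Icc_subset_Ici_self)
    (by simp)
    (fun t ht => Finset.sum_nonneg fun i _ => radialGradient_nonneg (hG0 i) ht.1.le)
    (fun t ht => HasDerivAt.fun_sum fun i _ => hasDerivAt_radialGradient (hG i) ht.1)
    (fun t ht => (Finset.sum_le_sum fun i _ => sub_le_self _ (mul_nonneg
        (div_nonneg n.cast_nonneg ht.1.le) (radialGradient_nonneg (hG0 i) ht.1.le))).trans
      (hw.sum_reaction_le k ht.1.le fun i => ha i t ⟨ht.1.le, ht.2.le.trans hrR⟩))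
    ((continuousOn_const.mul hw.continuousOn_sum_diag).mono (by
      rintro _ ⟨t, ht, rfl⟩
      exact Finset.sum_nonneg fun j _ => hw.iterate_nonneg _ j t ht.1))
  rw [hw.deriv_sum_succ k hr, ← hw.sum_succ_zero k]
  simpa only [intervalIntegral.integral_const_mul, mul_assoc] using key

end IsRadialIteration

theorem stmt9_general
    (N d : ℕ) (hd : 1 ≤ d)
    (f : Fin d → (Fin d → ℝ) → ℝ)
    -- (C1)
    (hf_nonneg : ∀ j v, (∀ i, 0 ≤ v i) → 0 ≤ f j v)
    (hC1 : ∀ j, ContDiffOn ℝ 1 (f j) {v : Fin d → ℝ | ∀ i, 0 ≤ v i})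
    -- (C2)
    (hC2 : ∀ j v w, (∀ i, 0 ≤ v i) → (∀ i, v i ≤ w i) → f j v ≤ f j w)
    -- continuous nonnegative coefficients φ₁,…,φ_d
    (φ : Fin d → ℝ → ℝ)
    (hφ_cont : ∀ i, ContinuousOn (φ i) (Ici 0))
    (hφ_nonneg : ∀ i, ∀ t ≥ (0:ℝ), 0 ≤ φ i t)
    -- R > 0 and φᵢᴿ = max {φᵢ(r) : 0 ≤ r ≤ R}
    (R : ℝ)
    (φR : Fin d → ℝ)
    (hφR : ∀ i, IsGreatest (φ i '' Icc 0 R) (φR i))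
    -- the successive approximations
    (w : ℕ → Fin d → ℝ → ℝ)
    (hw0 : ∀ i r, w 0 i r = 1 / (d : ℝ))
    (hwk : ∀ k i r, 0 ≤ r →
      w (k + 1) i r = 1 / (d : ℝ) +
        ∫ t in (0:ℝ)..r,
          (∫ s in (0:ℝ)..t, s ^ (N - 1) * (φ i s * f i (fun j => w k j s))) / t ^ (N - 1)) :
    -- conclusion
    ∀ k ≥ 1, ∀ r, 0 ≤ r → r ≤ R →
      (deriv (fun ρ => ∑ i, w k i ρ) r) ^ 2 ≤
        2 * (∑ i, φR i) *
          ∫ s in (1:ℝ)..(∑ i, w k i r), ∑ i, f i (fun _ => s) := by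
  intro k hk r hr hrR
  obtain ⟨m, rfl⟩ := Nat.exists_eq_add_of_le' hk
  have hw : IsRadialIteration (N - 1) (1 / d) φ f w :=
    ⟨by positivity, hf_nonneg, fun j => (hC1 j).continuousOn, hC2, hφ_cont, hφ_nonneg, hw0, hwk⟩
  have hdc : (d : ℝ) * (1 / d) = 1 := mul_one_div_cancel (Nat.cast_ne_zero.2 (by omega))
  simpa only [hdc] using
    hw.sq_deriv_sum_succ_le m (fun i t ht => (hφR i).2 ⟨t, ht, rfl⟩) hr hrR

theorem stmt9
    (N d : ℕ) (hN : 3 ≤ N) (hd : 1 ≤ d)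
    (f : Fin d → (Fin d → ℝ) → ℝ)
    -- (C1)
    (hf_nonneg : ∀ j v, (∀ i, 0 ≤ v i) → 0 ≤ f j v)
    (hC1 : ∀ j, ContDiffOn ℝ 1 (f j) {v : Fin d → ℝ | ∀ i, 0 ≤ v i})
    (hf0 : ∀ j, f j (fun _ => 0) = 0)
    (hfpos : ∀ j v, (∀ i, 0 ≤ v i) → (∃ i, 0 < v i) → 0 < f j v)
    -- (C2)
    (hC2 : ∀ j v w, (∀ i, 0 ≤ v i) → (∀ i, v i ≤ w i) → f j v ≤ f j w)
    -- continuous nonnegative coefficients φ₁,…,φ_d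
    (φ : Fin d → ℝ → ℝ)
    (hφ_cont : ∀ i, ContinuousOn (φ i) (Ici 0))
    (hφ_nonneg : ∀ i, ∀ t ≥ (0:ℝ), 0 ≤ φ i t)
    -- R > 0 and φᵢᴿ = max {φᵢ(r) : 0 ≤ r ≤ R}
    (R : ℝ) (hR : 0 < R)
    (φR : Fin d → ℝ)
    (hφR : ∀ i, IsGreatest (φ i '' Icc 0 R) (φR i))
    -- the successive approximations
    (w : ℕ → Fin d → ℝ → ℝ)
    (hw0 : ∀ i r, w 0 i r = 1 / (d : ℝ))
    (hwk : ∀ k i r, 0 ≤ r →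
      w (k + 1) i r = 1 / (d : ℝ) +
        ∫ t in (0:ℝ)..r,
          (∫ s in (0:ℝ)..t, s ^ (N - 1) * (φ i s * f i (fun j => w k j s))) / t ^ (N - 1)) :
    -- conclusion
    ∀ k ≥ 1, ∀ r, 0 ≤ r → r ≤ R →
      (deriv (fun ρ => ∑ i, w k i ρ) r) ^ 2 ≤
        2 * (∑ i, φR i) *
          ∫ s in (1:ℝ)..(∑ i, w k i r), ∑ i, f i (fun _ => s) :=
  stmt9_general N d hd f hf_nonneg hC1 hC2 φ hφ_cont hφ_nonneg R φR hφR w hw0 hwk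
end

section
/- Suppose (C1)–(C3) hold, φ_1,…,φ_d : [0,∞) → [0,∞) are continuous, R > 0, and set φ_i^R = max{φ_i(r) : 0 ≤ r ≤ R}. Let {w_i^k} be the successive approximations defined by w_i^0 ≡ 1/d and w_i^k(r) = 1/d + ∫₀^r t^{1-N} ∫₀^t s^{N-1} φ_i(s) f_i(w_1^{k-1}(s),…,w_d^{k-1}(s)) ds dt. Then for every k ≥ 1 the inequality ∫₁^{Σ_{i=1}^d w_i^k(R)} [∫₁^t Σ_{i=1}^d f_i(s,…,s) ds]^{-1/2} dt ≤ R √(2 Σ_{i=1}^d φ_i^R) holds; consequently Σ_{i=1}^d w_i^k(R) and (Σ_{i=1}^d w_i^k)'(R) are bounded above by constants independent of k. -/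
/-!
Sum the equations: `W = ∑ᵢ wᵢᵏ⁺¹` satisfies `W(0) = 1` and `W' = V := r^{1-N} ∫₀ʳ s^{N-1} Q`,
where `Q = ∑ᵢ φᵢ fᵢ(wᵏ)`. Since `wᵏ ≤ wᵏ⁺¹ ≤ W` componentwise, `Q ≤ Φ g(W)` on `[0, R]`, with
`g(t) = ∑ᵢ fᵢ(t, …, t)` and `Φ = ∑ᵢ φᵢᴿ`. Then `V' = Q - (N-1) V / r ≤ Φ g(W)`, so the energy
`2Φ G(W) - V²`, `G(x) = ∫₁ˣ g`, is nondecreasing and vanishes at `r = 0`: `W' ≤ √(2Φ G(W))`.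
Separating variables gives `∫₁^{W(R)} G^{-1/2} ≤ R √(2Φ)`. As `G ≤ F`, (C3) makes the left side
unbounded in `W(R)`, which bounds `W(R)` and then `W'(R) = V(R) ≤ √(2Φ G(W(R)))`.
-/

open MeasureTheory Set Filter

open intervalIntegral

theorem ContinuousOn.intervalIntegrable_of_Ici_s10 {c : ℝ → ℝ} {l a b : ℝ}
    (hc : ContinuousOn c (Ici l)) (ha : l ≤ a) (hb : l ≤ b) :
    IntervalIntegrable c volume a b :=
  (hc.mono fun _ hx => le_trans (le_min ha hb) hx.1).intervalIntegrable

theorem hasDerivAt_integral_of_continuousOn_Ici {c : ℝ → ℝ} {a b x : ℝ}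
    (hc : ContinuousOn c (Ici a)) (hb : a ≤ b) (hx : a < x) :
    HasDerivAt (fun u => ∫ t in b..u, c t) (c x) x :=
  integral_hasDerivAt_right (hc.intervalIntegrable_of_Ici_s10 hb hx.le)
    ((hc.mono Ioi_subset_Ici_self).stronglyMeasurableAtFilter isOpen_Ioi x hx)
    (hc.continuousAt (Ici_mem_nhds hx))

theorem continuousOn_integral_Ici {c : ℝ → ℝ} {a : ℝ} (hc : ContinuousOn c (Ici a)) :
    ContinuousOn (fun u => ∫ t in a..u, c t) (Ici a) := by
  intro x (hx : a ≤ x)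
  have hax : a ≤ x + 1 := by linarith
  have hprim := continuousOn_primitive_interval (μ := volume)
    ((hc.mono fun _ ht => (min_eq_left hax).ge.trans ht.1).integrableOn_compact
      (isCompact_uIcc (a := a) (b := x + 1)))
  rw [uIcc_of_le hax] at hprim
  exact (hprim x ⟨hx, by linarith⟩).mono_of_mem_nhdsWithin
    (mem_nhdsWithin.2 ⟨Iio (x + 1), isOpen_Iio, lt_add_one x, fun _ hy => ⟨hy.2, hy.1.le⟩⟩)

theorem mul_sub_le_integral {g : ℝ → ℝ} {a x m : ℝ} (hg : ContinuousOn g (Ici a))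
    (hgm : ∀ t, a ≤ t → m ≤ g t) (hx : a ≤ x) : m * (x - a) ≤ ∫ t in a..x, g t := by
  have := integral_mono_on hx (intervalIntegrable_const (μ := volume))
    (hg.intervalIntegrable_of_Ici_s10 le_rfl hx) fun t ht => hgm t ht.1
  simpa [mul_comm] using this

/-- For `n = N - 1`, `radialFlux n c` is the radial derivative `w'` of the solution of
`Δw = c` in `ℝᴺ`: in radial coordinates the equation reads `(rⁿ w')' = rⁿ c`. -/
noncomputable def radialFlux (n : ℕ) (c : ℝ → ℝ) (t : ℝ) : ℝ :=
  (∫ s in (0:ℝ)..t, s ^ n * c s) / t ^ n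

namespace radialFlux

variable {n : ℕ} {c : ℝ → ℝ} {t : ℝ}

@[simp]
theorem zero_right : radialFlux n c 0 = 0 := by
  simp [radialFlux]

theorem nonneg (hc : ∀ s, 0 ≤ s → 0 ≤ c s) (ht : 0 ≤ t) : 0 ≤ radialFlux n c t :=
  div_nonneg (integral_nonneg ht fun s hs => mul_nonneg (pow_nonneg hs.1 n) (hc s hs.1))
    (pow_nonneg ht n)

theorem abs_le {M : ℝ} (hc : ∀ s ∈ Icc 0 t, |c s| ≤ M) (ht : 0 ≤ t) :
    |radialFlux n c t| ≤ M * t := by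
  rcases ht.eq_or_lt with rfl | ht
  · simp
  have hint : ‖∫ s in (0:ℝ)..t, s ^ n * c s‖ ≤ t ^ n * M * |t - 0| := by
    refine norm_integral_le_of_norm_le_const fun s hs => ?_
    rw [uIoc_of_le ht.le] at hs
    rw [norm_mul, norm_pow, Real.norm_of_nonneg hs.1.le, Real.norm_eq_abs]
    exact mul_le_mul (pow_le_pow_left₀ hs.1.le hs.2 n) (hc s ⟨hs.1.le, hs.2⟩) (abs_nonneg _)
      (pow_nonneg ht.le n)
  rw [radialFlux, abs_div, abs_of_pos (pow_pos ht n), div_le_iff₀ (pow_pos ht n)]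
  rw [Real.norm_eq_abs, sub_zero, abs_of_pos ht] at hint
  linarith

theorem hasDerivAt (hc : ContinuousOn c (Ici 0)) (ht : 0 < t) :
    HasDerivAt (radialFlux n c) (c t - n / t * radialFlux n c t) t := by
  have hA := hasDerivAt_integral_of_continuousOn_Ici ((continuousOn_pow n).fun_mul hc) le_rfl ht
  refine (hA.div (hasDerivAt_pow n t) (pow_ne_zero n ht.ne')).congr_deriv ?_
  rcases n with _ | n
  · simp [radialFlux]
  · simp only [radialFlux, pow_succ, Nat.add_sub_cancel]
    field_simp

theorem continuousOn (hc : ContinuousOn c (Ici 0)) : ContinuousOn (radialFlux n c) (Ici 0) := by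
  intro t (ht : 0 ≤ t)
  rcases ht.eq_or_lt with rfl | ht
  · obtain ⟨M, hM⟩ := (isCompact_Icc (a := 0) (b := 1)).exists_bound_of_continuousOn
      (hc.mono fun _ hx => hx.1)
    rw [ContinuousWithinAt, zero_right]
    refine squeeze_zero_norm' ?_ (tendsto_nhdsWithin_of_tendsto_nhds
      (Continuous.tendsto' (continuous_const_mul M) 0 0 (mul_zero M)))
    filter_upwards [inter_mem_nhdsWithin (Ici 0) (Iic_mem_nhds one_pos)] with s hs
    exact abs_le (fun x hx => hM x ⟨hx.1, hx.2.trans hs.2⟩) hs.1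
  · exact (hasDerivAt hc ht).continuousAt.continuousWithinAt

theorem mono {c' : ℝ → ℝ} (hc : ContinuousOn c (Ici 0)) (hc' : ContinuousOn c' (Ici 0))
    (hcc' : ∀ s ∈ Icc 0 t, c s ≤ c' s) (ht : 0 ≤ t) : radialFlux n c t ≤ radialFlux n c' t :=
  div_le_div_of_nonneg_right
    (integral_mono_on ht (((continuousOn_pow n).fun_mul hc).intervalIntegrable_of_Ici_s10 le_rfl ht)
      (((continuousOn_pow n).fun_mul hc').intervalIntegrable_of_Ici_s10 le_rfl ht)
      fun s hs => mul_le_mul_of_nonneg_left (hcc' s hs) (pow_nonneg hs.1 n))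
    (pow_nonneg ht n)

theorem sum {ι : Type*} (s : Finset ι) {c : ι → ℝ → ℝ} (hc : ∀ i ∈ s, ContinuousOn (c i) (Ici 0))
    (ht : 0 ≤ t) : ∑ i ∈ s, radialFlux n (c i) t = radialFlux n (fun x => ∑ i ∈ s, c i x) t := by
  simp only [radialFlux, ← Finset.sum_div, Finset.mul_sum]
  rw [integral_finsetSum fun i hi =>
    ((continuousOn_pow n).fun_mul (hc i hi)).intervalIntegrable_of_Ici_s10 le_rfl ht]

end radialFlux

theorem sq_sub_sq_le_of_hasDerivAt {W V V' G g : ℝ → ℝ} {a b c : ℝ} (hab : a ≤ b)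
    (hW : ContinuousOn W (Icc a b)) (hV : ContinuousOn V (Icc a b))
    (hG : ∀ x ∈ Icc a b, HasDerivAt G (g (W x)) (W x))
    (hW' : ∀ x ∈ Ioo a b, HasDerivAt W (V x) x) (hV' : ∀ x ∈ Ioo a b, HasDerivAt V (V' x) x)
    (hV'le : ∀ x ∈ Ioo a b, V' x ≤ c * g (W x)) (hV0 : ∀ x ∈ Ioo a b, 0 ≤ V x) :
    V b ^ 2 - V a ^ 2 ≤ 2 * c * (G (W b) - G (W a)) := by
  have hGW : ContinuousOn (fun x => G (W x)) (Icc a b) := fun x hx =>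
    (hG x hx).continuousAt.comp_continuousWithinAt (hW x hx)
  have hψ : MonotoneOn (fun x => 2 * c * G (W x) - V x ^ 2) (Icc a b) := by
    refine monotoneOn_of_hasDerivWithinAt_nonneg (convex_Icc a b)
      ((hGW.const_smul (2 * c)).sub (hV.pow 2))
      (f' := fun x => 2 * V x * (c * g (W x) - V' x)) (fun x hx => ?_) fun x hx => ?_
    · rw [interior_Icc] at hx
      have hGW' := ((hG x (Ioo_subset_Icc_self hx)).comp x (hW' x hx)).const_mul (2 * c)
      exact ((hGW'.sub ((hV' x hx).pow 2)).congr_deriv (by simp; ring)).hasDerivWithinAt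
    · rw [interior_Icc] at hx
      exact mul_nonneg (mul_nonneg zero_le_two (hV0 x hx)) (sub_nonneg.2 (hV'le x hx))
  linarith [hψ (left_mem_Icc.2 hab) (right_mem_Icc.2 hab) hab]

/-- At `y = 0` this holds because `0 ^ (-1/2) = 0` in Lean. -/
theorem mul_rpow_neg_half_le_sqrt {v y K : ℝ} (hy : 0 ≤ y) (h : v ^ 2 ≤ K * y) :
    v * y ^ (-(1/2) : ℝ) ≤ √K := by
  rcases hy.eq_or_lt with rfl | hy
  · simp [Real.sqrt_nonneg]
  rw [Real.rpow_neg hy.le, ← Real.sqrt_eq_rpow, ← div_eq_mul_inv,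
    div_le_iff₀ (Real.sqrt_pos.2 hy), ← Real.sqrt_mul' K hy.le]
  exact Real.le_sqrt_of_sq_le h

/-- The change of variables for monotone maps needs no regularity of `G ^ (-1/2)`, so the
singularity where `G ∘ W` vanishes is harmless. -/
theorem intervalIntegral_rpow_neg_half_le {W V G : ℝ → ℝ} {a b K : ℝ} (hab : a ≤ b)
    (hW : ContinuousOn W (Icc a b)) (hW' : ∀ x ∈ Ioo a b, HasDerivAt W (V x) x)
    (hV0 : ∀ x ∈ Ioo a b, 0 ≤ V x) (hG0 : ∀ x ∈ Ioo a b, 0 ≤ G (W x))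
    (hVG : ∀ x ∈ Ioo a b, V x ^ 2 ≤ K * G (W x)) :
    ∫ y in W a..W b, G y ^ (-(1/2) : ℝ) ≤ (b - a) * √K := by
  have hWab : W a ≤ W b := by
    refine monotoneOn_of_hasDerivWithinAt_nonneg (convex_Icc a b) hW (f' := V)
      (fun x hx => ?_) (fun x hx => ?_) (left_mem_Icc.2 hab) (right_mem_Icc.2 hab) hab
    · rw [interior_Icc] at hx ⊢
      exact (hW' x hx).hasDerivWithinAt
    · rw [interior_Icc] at hx
      exact hV0 x hx
  calc ∫ y in W a..W b, G y ^ (-(1/2) : ℝ)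
      = ∫ y in Icc (W a) (W b), G y ^ (-(1/2) : ℝ) := by
        rw [integral_of_le hWab, integral_Icc_eq_integral_Ioc]
    _ = ∫ x in Ioo a b, V x • G (W x) ^ (-(1/2) : ℝ) := by
        rw [← integral_Icc_deriv_smul_of_deriv_nonneg hW hW' hV0 hab,
          integral_Icc_eq_integral_Ioo]
    _ ≤ ∫ _ in Ioo a b, √K :=
        integral_mono_of_nonneg
          (ae_restrict_of_forall_mem measurableSet_Ioo fun x hx =>
            mul_nonneg (hV0 x hx) (Real.rpow_nonneg (hG0 x hx) _))
          (integrableOn_const measure_Ioo_lt_top.ne)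
          (ae_restrict_of_forall_mem measurableSet_Ioo fun x hx =>
            mul_rpow_neg_half_le_sqrt (hG0 x hx) (hVG x hx))
    _ = (b - a) * √K := by simp [hab]

theorem exists_lt_intervalIntegral_of_not_integrableOn {h k : ℝ → ℝ} {a : ℝ} (C : ℝ)
    (hk : ¬ IntegrableOn k (Ioi a)) (hkm : AEStronglyMeasurable k (volume.restrict (Ioi a)))
    (hh : ∀ x, a ≤ x → IntervalIntegrable h volume a x) (hkh : ∀ x, a < x → ‖k x‖ ≤ h x) :
    ∃ x, a ≤ x ∧ C < ∫ t in a..x, h t := by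
  by_contra! hC
  have hnorm : ∀ x, a ≤ x → ∫ t in a..x, ‖h t‖ = ∫ t in a..x, h t := fun x hx =>
    integral_congr_ae (ae_of_all _ fun t ht => Real.norm_of_nonneg
      ((norm_nonneg _).trans (hkh t (by rw [uIoc_of_le hx] at ht; exact ht.1))))
  refine hk (Integrable.mono ?_ hkm (ae_restrict_of_forall_mem measurableSet_Ioi fun x hx =>
    (hkh x hx).trans (Real.le_norm_self _)))
  refine integrableOn_Ioi_of_intervalIntegral_norm_bounded C a
    (fun n : ℕ => (hh (a + n) (by simp)).1)
    (tendsto_atTop_add_const_left atTop a tendsto_natCast_atTop_atTop) (Eventually.of_forall ?_)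
  intro n
  rw [hnorm _ (by simp)]
  exact hC _ (by simp)

theorem intervalIntegrable_integral_rpow_neg_half {g : ℝ → ℝ} {a x m : ℝ}
    (hg : ContinuousOn g (Ici a)) (hm : 0 < m) (hgm : ∀ t, a ≤ t → m ≤ g t) (hx : a ≤ x) :
    IntervalIntegrable (fun t => (∫ s in a..t, g s) ^ (-(1/2) : ℝ)) volume a x := by
  have hpos : ∀ t ∈ Ioc a x, 0 < m * (t - a) := fun t ht => mul_pos hm (sub_pos.2 ht.1)
  have hdom : IntervalIntegrable (fun t => m ^ (-(1/2) : ℝ) * (t - a) ^ (-(1/2) : ℝ))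
      volume a x := by
    simpa using ((intervalIntegrable_rpow' (a := 0) (b := x - a)
      (by norm_num : (-1 : ℝ) < -(1/2))).comp_sub_right a).const_mul (m ^ (-(1/2) : ℝ))
  refine hdom.mono_fun ?_ ?_
  · rw [uIoc_of_le hx]
    refine ContinuousOn.aestronglyMeasurable (fun t ht => ?_) measurableSet_Ioc
    exact ((continuousOn_integral_Ici hg t ht.1.le).mono
      (Ioc_subset_Ioi_self.trans Ioi_subset_Ici_self)).rpow_const
      (Or.inl ((hpos t ht).trans_le (mul_sub_le_integral hg hgm ht.1.le)).ne')
  · rw [uIoc_of_le hx]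
    refine ae_restrict_of_forall_mem measurableSet_Ioc fun t ht => ?_
    have hG := mul_sub_le_integral hg hgm ht.1.le
    dsimp only
    rw [Real.norm_of_nonneg (Real.rpow_nonneg ((hpos t ht).le.trans hG) _), Real.norm_of_nonneg
      (mul_nonneg (Real.rpow_nonneg hm.le _) (Real.rpow_nonneg (sub_nonneg.2 ht.1.le) _)),
      ← Real.mul_rpow hm.le (sub_nonneg.2 ht.1.le)]
    exact Real.rpow_le_rpow_of_nonpos (hpos t ht) hG (by norm_num)

theorem exists_lt_integral_rpow_neg_half {g : ℝ → ℝ} (hg : ContinuousOn g (Ici 0))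
    (hg0 : ∀ t, 0 ≤ t → 0 ≤ g t) (hg1 : 0 < g 1) (hgm : ∀ t, 1 ≤ t → g 1 ≤ g t)
    (hint : ¬ IntegrableOn (fun s => (∫ t in (0:ℝ)..s, g t) ^ (-(1/2) : ℝ)) (Ioi 1)) (C : ℝ) :
    ∃ x, 1 ≤ x ∧ C < ∫ t in (1:ℝ)..x, (∫ s in (1:ℝ)..t, g s) ^ (-(1/2) : ℝ) := by
  have hg' : ContinuousOn g (Ici 1) := hg.mono (Ici_subset_Ici.2 zero_le_one)
  have hGpos : ∀ x, 1 < x → 0 < ∫ s in (1:ℝ)..x, g s := fun x hx =>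
    (mul_pos hg1 (sub_pos.2 hx)).trans_le (mul_sub_le_integral hg' hgm hx.le)
  have hGF : ∀ x, 1 ≤ x → ∫ s in (1:ℝ)..x, g s ≤ ∫ s in (0:ℝ)..x, g s := fun x hx => by
    rw [← integral_add_adjacent_intervals (b := 1)
      (hg.intervalIntegrable_of_Ici_s10 le_rfl zero_le_one)
      (hg.intervalIntegrable_of_Ici_s10 zero_le_one (zero_le_one.trans hx))]
    exact le_add_of_nonneg_left (integral_nonneg zero_le_one fun t ht => hg0 t ht.1)
  refine exists_lt_intervalIntegral_of_not_integrableOn C hint ?_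
    (fun x hx => intervalIntegrable_integral_rpow_neg_half hg' hg1 hgm hx) fun x hx => ?_
  · refine ContinuousOn.aestronglyMeasurable (fun x hx => ?_) measurableSet_Ioi
    exact ((continuousOn_integral_Ici hg x (zero_le_one.trans (le_of_lt hx) : (0:ℝ) ≤ x)).mono
      (Ioi_subset_Ici zero_le_one)).rpow_const
      (Or.inl ((hGpos x hx).trans_le (hGF x hx.le)).ne')
  · rw [Real.norm_of_nonneg (Real.rpow_nonneg ((hGpos x hx).le.trans (hGF x hx.le)) _)]
    exact Real.rpow_le_rpow_of_nonpos (hGpos x hx) (hGF x hx.le) (by norm_num)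

theorem Fin.sum_one_div_cast {d : ℕ} (hd : 1 ≤ d) : ∑ _i : Fin d, 1 / (d : ℝ) = 1 := by
  rw [Finset.sum_const, Finset.card_univ, Fintype.card_fin, nsmul_eq_mul,
    mul_one_div_cancel (by positivity)]

structure IsAdmissible {d : ℕ} (φ : Fin d → ℝ → ℝ) (f : Fin d → (Fin d → ℝ) → ℝ) : Prop where
  f_nonneg : ∀ j v, (∀ i, 0 ≤ v i) → 0 ≤ f j v
  f_continuousOn : ∀ j, ContinuousOn (f j) {v | ∀ i, 0 ≤ v i}
  f_mono : ∀ j v w, (∀ i, 0 ≤ v i) → (∀ i, v i ≤ w i) → f j v ≤ f j w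
  φ_nonneg : ∀ i, ∀ t ≥ (0:ℝ), 0 ≤ φ i t
  φ_continuousOn : ∀ i, ContinuousOn (φ i) (Ici 0)

variable {d : ℕ} {f : Fin d → (Fin d → ℝ) → ℝ} {φ : Fin d → ℝ → ℝ}

def source (φ : Fin d → ℝ → ℝ) (f : Fin d → (Fin d → ℝ) → ℝ) (u : Fin d → ℝ → ℝ) (i : Fin d)
    (s : ℝ) : ℝ :=
  φ i s * f i fun j => u j s

def totalSource (φ : Fin d → ℝ → ℝ) (f : Fin d → (Fin d → ℝ) → ℝ) (u : Fin d → ℝ → ℝ)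
    (s : ℝ) : ℝ :=
  ∑ i, source φ f u i s

def diagSum (f : Fin d → (Fin d → ℝ) → ℝ) (t : ℝ) : ℝ :=
  ∑ i, f i fun _ => t

namespace IsAdmissible

theorem source_nonneg (h : IsAdmissible φ f) {u : Fin d → ℝ → ℝ} {i : Fin d} {s : ℝ}
    (hu : ∀ j, 0 ≤ u j s) (hs : 0 ≤ s) : 0 ≤ source φ f u i s :=
  mul_nonneg (h.φ_nonneg i s hs) (h.f_nonneg i _ hu)

theorem totalSource_nonneg (h : IsAdmissible φ f) {u : Fin d → ℝ → ℝ} {s : ℝ}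
    (hu : ∀ j, 0 ≤ u j s) (hs : 0 ≤ s) : 0 ≤ totalSource φ f u s :=
  Finset.sum_nonneg fun _ _ => h.source_nonneg hu hs

theorem continuousOn_source (h : IsAdmissible φ f) {u : Fin d → ℝ → ℝ} {i : Fin d}
    (hu : ∀ j, ContinuousOn (u j) (Ici 0)) (hu0 : ∀ j s, 0 ≤ s → 0 ≤ u j s) :
    ContinuousOn (source φ f u i) (Ici 0) :=
  (h.φ_continuousOn i).mul
    ((h.f_continuousOn i).comp (continuousOn_pi.2 hu) fun s hs j => hu0 j s hs)

theorem source_mono (h : IsAdmissible φ f) {u v : Fin d → ℝ → ℝ} {i : Fin d} {s : ℝ}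
    (hu : ∀ j, 0 ≤ u j s) (huv : ∀ j, u j s ≤ v j s) (hs : 0 ≤ s) :
    source φ f u i s ≤ source φ f v i s :=
  mul_le_mul_of_nonneg_left (h.f_mono i _ _ hu huv) (h.φ_nonneg i s hs)

theorem totalSource_le (h : IsAdmissible φ f) {u : Fin d → ℝ → ℝ} {s y : ℝ} {φR : Fin d → ℝ}
    (hφR : ∀ i, φ i s ≤ φR i) (hφR0 : ∀ i, 0 ≤ φR i) (hu : ∀ j, 0 ≤ u j s)
    (huy : ∀ j, u j s ≤ y) :
    totalSource φ f u s ≤ (∑ i, φR i) * diagSum f y := by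
  rw [totalSource, Finset.sum_mul]
  refine Finset.sum_le_sum fun i _ => ?_
  have hy : 0 ≤ y := (hu i).trans (huy i)
  calc source φ f u i s ≤ φR i * f i fun _ => y :=
        mul_le_mul (hφR i) (h.f_mono i _ _ hu huy) (h.f_nonneg i _ hu) (hφR0 i)
    _ ≤ φR i * diagSum f y :=
        mul_le_mul_of_nonneg_left (Finset.single_le_sum (fun j _ => h.f_nonneg j _ fun _ => hy)
          (Finset.mem_univ i)) (hφR0 i)

theorem diagSum_nonneg (h : IsAdmissible φ f) {t : ℝ} (ht : 0 ≤ t) : 0 ≤ diagSum f t :=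
  Finset.sum_nonneg fun i _ => h.f_nonneg i _ fun _ => ht

theorem continuousOn_diagSum (h : IsAdmissible φ f) : ContinuousOn (diagSum f) (Ici 0) :=
  continuousOn_finsetSum _ fun i _ =>
    (h.f_continuousOn i).comp (continuousOn_pi.2 fun _ => continuousOn_id) fun _ ht _ => ht

theorem diagSum_mono (h : IsAdmissible φ f) {s t : ℝ} (hs : 0 ≤ s) (hst : s ≤ t) :
    diagSum f s ≤ diagSum f t :=
  Finset.sum_le_sum fun i _ => h.f_mono i _ _ (fun _ => hs) fun _ => hst

theorem integral_diagSum_mono (h : IsAdmissible φ f) {a x y : ℝ} (ha : 0 ≤ a) (hx : a ≤ x)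
    (hxy : x ≤ y) : ∫ s in a..x, diagSum f s ≤ ∫ s in a..y, diagSum f s :=
  integral_mono_interval le_rfl hx hxy
    (ae_restrict_of_forall_mem measurableSet_Ioc fun _ hs => h.diagSum_nonneg (ha.trans hs.1.le))
    (h.continuousOn_diagSum.intervalIntegrable_of_Ici_s10 ha (ha.trans (hx.trans hxy)))

theorem integral_diagSum_nonneg (h : IsAdmissible φ f) {a x : ℝ} (ha : 0 ≤ a) (hx : a ≤ x) :
    0 ≤ ∫ s in a..x, diagSum f s := by
  simpa using h.integral_diagSum_mono ha le_rfl hx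

end IsAdmissible

structure IsSuccApprox (n : ℕ) (φ : Fin d → ℝ → ℝ) (f : Fin d → (Fin d → ℝ) → ℝ)
    (w : ℕ → Fin d → ℝ → ℝ) : Prop where
  zero : ∀ i r, w 0 i r = 1 / (d : ℝ)
  succ : ∀ k i r, 0 ≤ r →
    w (k + 1) i r = 1 / (d : ℝ) + ∫ t in (0:ℝ)..r, radialFlux n (source φ f (w k) i) t

namespace IsSuccApprox

variable {n : ℕ} {w : ℕ → Fin d → ℝ → ℝ}

theorem le_apply (hw : IsSuccApprox n φ f w) (h : IsAdmissible φ f) (k : ℕ) (i : Fin d) {r : ℝ}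
    (hr : 0 ≤ r) : 1 / (d : ℝ) ≤ w k i r := by
  induction k generalizing i r with
  | zero => rw [hw.zero]
  | succ k ih =>
    rw [hw.succ k i r hr, le_add_iff_nonneg_right]
    refine integral_nonneg hr fun t ht => radialFlux.nonneg (fun s hs => ?_) ht.1
    exact h.source_nonneg (fun j => le_trans (by positivity) (ih j hs)) hs

theorem nonneg (hw : IsSuccApprox n φ f w) (h : IsAdmissible φ f) (k : ℕ) (i : Fin d) {r : ℝ}
    (hr : 0 ≤ r) : 0 ≤ w k i r :=
  le_trans (by positivity) (hw.le_apply h k i hr)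

theorem one_le_sum (hw : IsSuccApprox n φ f w) (h : IsAdmissible φ f) (hd : 1 ≤ d) (k : ℕ)
    {r : ℝ} (hr : 0 ≤ r) : 1 ≤ ∑ i, w k i r :=
  (Fin.sum_one_div_cast hd).symm.trans_le (Finset.sum_le_sum fun i _ => hw.le_apply h k i hr)

theorem continuousOn (hw : IsSuccApprox n φ f w) (h : IsAdmissible φ f) (k : ℕ) (i : Fin d) :
    ContinuousOn (w k i) (Ici 0) := by
  induction k generalizing i with
  | zero => simpa only [funext (hw.zero i)] using continuousOn_const
  | succ k ih =>
    exact (continuousOn_const.add (continuousOn_integral_Ici (radialFlux.continuousOn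
      (h.continuousOn_source ih fun j _ hs => hw.nonneg h k j hs)))).congr
      fun r hr => hw.succ k i r hr

theorem continuousOn_source (hw : IsSuccApprox n φ f w) (h : IsAdmissible φ f) (k : ℕ)
    (i : Fin d) : ContinuousOn (source φ f (w k) i) (Ici 0) :=
  h.continuousOn_source (hw.continuousOn h k) fun j _ hs => hw.nonneg h k j hs

theorem le_succ (hw : IsSuccApprox n φ f w) (h : IsAdmissible φ f) (k : ℕ) (i : Fin d) {r : ℝ}
    (hr : 0 ≤ r) : w k i r ≤ w (k + 1) i r := by
  induction k generalizing i r with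
  | zero => rw [hw.zero]; exact hw.le_apply h 1 i hr
  | succ k ih =>
    have hsrc := hw.continuousOn_source h
    rw [hw.succ k i r hr, hw.succ (k + 1) i r hr, add_le_add_iff_left]
    refine integral_mono_on hr ((radialFlux.continuousOn (hsrc k i)).intervalIntegrable_of_Ici_s10
      le_rfl hr) ((radialFlux.continuousOn (hsrc (k + 1) i)).intervalIntegrable_of_Ici_s10 le_rfl hr)
      fun t ht => radialFlux.mono (hsrc k i) (hsrc (k + 1) i) (fun s hs => ?_) ht.1
    exact h.source_mono (fun j => hw.nonneg h k j hs.1) (fun j => ih j hs.1) hs.1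

theorem continuousOn_totalSource (hw : IsSuccApprox n φ f w) (h : IsAdmissible φ f) (k : ℕ) :
    ContinuousOn (totalSource φ f (w k)) (Ici 0) :=
  continuousOn_finsetSum _ fun i _ => hw.continuousOn_source h k i

theorem radialFlux_totalSource_nonneg (hw : IsSuccApprox n φ f w) (h : IsAdmissible φ f)
    (k : ℕ) {r : ℝ} (hr : 0 ≤ r) : 0 ≤ radialFlux n (totalSource φ f (w k)) r :=
  radialFlux.nonneg (fun _ hs => h.totalSource_nonneg (fun j => hw.nonneg h k j hs) hs) hr

theorem sum_succ (hw : IsSuccApprox n φ f w) (h : IsAdmissible φ f) (hd : 1 ≤ d) (k : ℕ)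
    {r : ℝ} (hr : 0 ≤ r) :
    ∑ i, w (k + 1) i r = 1 + ∫ t in (0:ℝ)..r, radialFlux n (totalSource φ f (w k)) t := by
  have hsrc : ∀ i ∈ Finset.univ, ContinuousOn (source φ f (w k) i) (Ici 0) := fun i _ =>
    hw.continuousOn_source h k i
  rw [Finset.sum_congr rfl fun i _ => hw.succ k i r hr, Finset.sum_add_distrib,
    Fin.sum_one_div_cast hd, ← integral_finsetSum fun i hi =>
      (radialFlux.continuousOn (hsrc i hi)).intervalIntegrable_of_Ici_s10 le_rfl hr]
  congr 1
  exact integral_congr fun t ht => radialFlux.sum _ hsrc ((le_min le_rfl hr).trans ht.1)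

theorem sum_succ_zero (hw : IsSuccApprox n φ f w) (h : IsAdmissible φ f) (hd : 1 ≤ d) (k : ℕ) :
    ∑ i, w (k + 1) i 0 = 1 := by
  simp [hw.sum_succ h hd k le_rfl]

theorem hasDerivAt_sum_succ (hw : IsSuccApprox n φ f w) (h : IsAdmissible φ f) (hd : 1 ≤ d)
    (k : ℕ) {r : ℝ} (hr : 0 < r) :
    HasDerivAt (fun ρ => ∑ i, w (k + 1) i ρ) (radialFlux n (totalSource φ f (w k)) r) r := by
  refine ((hasDerivAt_integral_of_continuousOn_Ici (radialFlux.continuousOn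
    (hw.continuousOn_totalSource h k)) le_rfl hr).const_add 1).congr_of_eventuallyEq ?_
  filter_upwards [Ioi_mem_nhds hr] with ρ hρ using hw.sum_succ h hd k hρ.le

theorem sq_radialFlux_le (hw : IsSuccApprox n φ f w) (h : IsAdmissible φ f) (hd : 1 ≤ d)
    {R : ℝ} {φR : Fin d → ℝ} (hφR : ∀ i, ∀ s ∈ Icc 0 R, φ i s ≤ φR i) (k : ℕ) {r : ℝ}
    (hr : r ∈ Icc 0 R) :
    radialFlux n (totalSource φ f (w k)) r ^ 2 ≤
      2 * (∑ i, φR i) * ∫ t in (1:ℝ)..(∑ i, w (k + 1) i r), diagSum f t := by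
  set Q := totalSource φ f (w k)
  set W := fun ρ => ∑ i, w (k + 1) i ρ
  have hQc : ContinuousOn Q (Ici 0) := hw.continuousOn_totalSource h k
  have hφR0 : ∀ i, 0 ≤ φR i := fun i =>
    (h.φ_nonneg i 0 le_rfl).trans (hφR i 0 ⟨le_rfl, hr.1.trans hr.2⟩)
  have hQle : ∀ x ∈ Icc 0 R, Q x ≤ (∑ i, φR i) * diagSum f (W x) := fun x hx =>
    h.totalSource_le (fun i => hφR i x hx) hφR0 (fun j => hw.nonneg h k j hx.1)
      fun j => (hw.le_succ h k j hx.1).trans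
        (Finset.single_le_sum (fun i _ => hw.nonneg h (k + 1) i hx.1) (Finset.mem_univ j))
  have hV'le : ∀ x ∈ Ioo 0 r, Q x - n / x * radialFlux n Q x ≤ (∑ i, φR i) * diagSum f (W x) :=
    fun x hx => (sub_le_self _ (mul_nonneg (div_nonneg n.cast_nonneg hx.1.le)
      (hw.radialFlux_totalSource_nonneg h k hx.1.le))).trans (hQle x ⟨hx.1.le, hx.2.le.trans hr.2⟩)
  have key := sq_sub_sq_le_of_hasDerivAt (W := W) (G := fun y => ∫ t in (1:ℝ)..y, diagSum f t)
    hr.1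
    (continuousOn_finsetSum _ fun i _ => (hw.continuousOn h (k + 1) i).mono Icc_subset_Ici_self)
    ((radialFlux.continuousOn hQc).mono Icc_subset_Ici_self)
    (fun x hx => hasDerivAt_integral_of_continuousOn_Ici h.continuousOn_diagSum zero_le_one
      (zero_lt_one.trans_le (hw.one_le_sum h hd (k + 1) hx.1)))
    (fun x hx => hw.hasDerivAt_sum_succ h hd k hx.1) (fun x hx => radialFlux.hasDerivAt hQc hx.1)
    hV'le (fun x hx => hw.radialFlux_totalSource_nonneg h k hx.1.le)
  simpa [W, hw.sum_succ_zero h hd k] using key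

theorem integral_rpow_neg_half_le (hw : IsSuccApprox n φ f w) (h : IsAdmissible φ f)
    (hd : 1 ≤ d) {R : ℝ} (hR : 0 ≤ R) {φR : Fin d → ℝ} (hφR : ∀ i, ∀ s ∈ Icc 0 R, φ i s ≤ φR i)
    (k : ℕ) :
    ∫ t in (1:ℝ)..(∑ i, w (k + 1) i R), (∫ s in (1:ℝ)..t, diagSum f s) ^ (-(1/2) : ℝ) ≤
      R * √(2 * ∑ i, φR i) := by
  have key := intervalIntegral_rpow_neg_half_le (W := fun ρ => ∑ i, w (k + 1) i ρ)
    (G := fun y => ∫ s in (1:ℝ)..y, diagSum f s) hR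
    (continuousOn_finsetSum _ fun i _ => (hw.continuousOn h (k + 1) i).mono Icc_subset_Ici_self)
    (fun x hx => hw.hasDerivAt_sum_succ h hd k hx.1)
    (fun x hx => hw.radialFlux_totalSource_nonneg h k hx.1.le)
    (fun x hx => h.integral_diagSum_nonneg zero_le_one (hw.one_le_sum h hd (k + 1) hx.1.le))
    (fun x hx => hw.sq_radialFlux_le h hd hφR k ⟨hx.1.le, hx.2.le⟩)
  simpa [hw.sum_succ_zero h hd k] using key

end IsSuccApprox

theorem stmt10_general
    (N d : ℕ) (hd : 1 ≤ d)
    (f : Fin d → (Fin d → ℝ) → ℝ)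
    -- (C1)
    (hf_nonneg : ∀ j v, (∀ i, 0 ≤ v i) → 0 ≤ f j v)
    (hC1 : ∀ j, ContDiffOn ℝ 1 (f j) {v : Fin d → ℝ | ∀ i, 0 ≤ v i})
    (hfpos : ∀ j v, (∀ i, 0 ≤ v i) → (∃ i, 0 < v i) → 0 < f j v)
    -- (C2)
    (hC2 : ∀ j v w, (∀ i, 0 ≤ v i) → (∀ i, v i ≤ w i) → f j v ≤ f j w)
    -- (C3)
    (hC3 : ¬ IntegrableOn
      (fun s : ℝ => (∫ t in (0:ℝ)..s, ∑ i, f i (fun _ => t)) ^ (-(1/2) : ℝ)) (Ioi 1))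
    -- continuous nonnegative coefficients φ₁,…,φ_d
    (φ : Fin d → ℝ → ℝ)
    (hφ_cont : ∀ i, ContinuousOn (φ i) (Ici 0))
    (hφ_nonneg : ∀ i, ∀ t ≥ (0:ℝ), 0 ≤ φ i t)
    -- R > 0 and φᵢᴿ = max {φᵢ(r) : 0 ≤ r ≤ R}
    (R : ℝ) (hR : 0 < R)
    (φR : Fin d → ℝ)
    (hφR : ∀ i, IsGreatest (φ i '' Icc 0 R) (φR i))
    -- the successive approximations
    (w : ℕ → Fin d → ℝ → ℝ)
    (hw0 : ∀ i r, w 0 i r = 1 / (d : ℝ))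
    (hwk : ∀ k i r, 0 ≤ r →
      w (k + 1) i r = 1 / (d : ℝ) +
        ∫ t in (0:ℝ)..r,
          (∫ s in (0:ℝ)..t, s ^ (N - 1) * (φ i s * f i (fun j => w k j s))) / t ^ (N - 1)) :
    -- conclusions
    (∀ k ≥ 1,
      ∫ t in (1:ℝ)..(∑ i, w k i R),
          (∫ s in (1:ℝ)..t, ∑ i, f i (fun _ => s)) ^ (-(1/2) : ℝ) ≤
        R * Real.sqrt (2 * ∑ i, φR i)) ∧
    (∃ B₁ B₂ : ℝ, ∀ k ≥ 1,
      (∑ i, w k i R) ≤ B₁ ∧ deriv (fun ρ => ∑ i, w k i ρ) R ≤ B₂) := by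
  have h : IsAdmissible φ f := ⟨hf_nonneg, fun j => (hC1 j).continuousOn, hC2, hφ_nonneg, hφ_cont⟩
  have hw : IsSuccApprox (N - 1) φ f w := ⟨hw0, hwk⟩
  have hφR' : ∀ i, ∀ s ∈ Icc 0 R, φ i s ≤ φR i := fun i s hs => (hφR i).2 (mem_image_of_mem _ hs)
  have hg1 : 0 < diagSum f 1 := Finset.sum_pos
    (fun i _ => hfpos i _ (fun _ => zero_le_one) ⟨⟨0, hd⟩, one_pos⟩) ⟨⟨0, hd⟩, Finset.mem_univ _⟩
  have hgm : ∀ t, 1 ≤ t → diagSum f 1 ≤ diagSum f t := fun t ht => h.diagSum_mono zero_le_one ht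
  set Φ := ∑ i, φR i
  set G := fun x => ∫ s in (1:ℝ)..x, diagSum f s
  refine ⟨fun k hk => ?_, ?_⟩
  · obtain ⟨k, rfl⟩ := Nat.exists_eq_add_of_le' hk
    exact hw.integral_rpow_neg_half_le h hd hR.le hφR' k
  obtain ⟨x₀, hx₀1, hx₀⟩ := exists_lt_integral_rpow_neg_half h.continuousOn_diagSum
    (fun t ht => h.diagSum_nonneg ht) hg1 hgm hC3 (R * √(2 * Φ))
  refine ⟨x₀, √(2 * Φ) * √(G x₀), fun k hk => ?_⟩
  obtain ⟨k, rfl⟩ := Nat.exists_eq_add_of_le' hk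
  have hW1 := hw.one_le_sum h hd (k + 1) hR.le
  have hWx₀ : ∑ i, w (k + 1) i R ≤ x₀ := by
    by_contra! hlt
    refine (hw.integral_rpow_neg_half_le h hd hR.le hφR' k).not_gt (hx₀.trans_le ?_)
    exact integral_mono_interval le_rfl hx₀1 hlt.le
      (ae_restrict_of_forall_mem measurableSet_Ioc fun t ht =>
        Real.rpow_nonneg (h.integral_diagSum_nonneg zero_le_one ht.1.le) _)
      (intervalIntegrable_integral_rpow_neg_half (h.continuousOn_diagSum.mono
        (Ici_subset_Ici.2 zero_le_one)) hg1 hgm hW1)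
  refine ⟨hWx₀, ?_⟩
  rw [(hw.hasDerivAt_sum_succ h hd k hR).deriv]
  calc _ ≤ √(2 * Φ * G (∑ i, w (k + 1) i R)) :=
        Real.le_sqrt_of_sq_le (hw.sq_radialFlux_le h hd hφR' k ⟨hR.le, le_rfl⟩)
    _ = √(2 * Φ) * √(G (∑ i, w (k + 1) i R)) :=
        Real.sqrt_mul' _ (h.integral_diagSum_nonneg zero_le_one hW1)
    _ ≤ √(2 * Φ) * √(G x₀) := by
        gcongr
        exact h.integral_diagSum_mono zero_le_one hW1 hWx₀

theorem stmt10
    (N d : ℕ) (hN : 3 ≤ N) (hd : 1 ≤ d)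
    (f : Fin d → (Fin d → ℝ) → ℝ)
    -- (C1)
    (hf_nonneg : ∀ j v, (∀ i, 0 ≤ v i) → 0 ≤ f j v)
    (hC1 : ∀ j, ContDiffOn ℝ 1 (f j) {v : Fin d → ℝ | ∀ i, 0 ≤ v i})
    (hf0 : ∀ j, f j (fun _ => 0) = 0)
    (hfpos : ∀ j v, (∀ i, 0 ≤ v i) → (∃ i, 0 < v i) → 0 < f j v)
    -- (C2)
    (hC2 : ∀ j v w, (∀ i, 0 ≤ v i) → (∀ i, v i ≤ w i) → f j v ≤ f j w)
    -- (C3)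
    (hC3 : ¬ IntegrableOn
      (fun s : ℝ => (∫ t in (0:ℝ)..s, ∑ i, f i (fun _ => t)) ^ (-(1/2) : ℝ)) (Ioi 1))
    -- continuous nonnegative coefficients φ₁,…,φ_d
    (φ : Fin d → ℝ → ℝ)
    (hφ_cont : ∀ i, ContinuousOn (φ i) (Ici 0))
    (hφ_nonneg : ∀ i, ∀ t ≥ (0:ℝ), 0 ≤ φ i t)
    -- R > 0 and φᵢᴿ = max {φᵢ(r) : 0 ≤ r ≤ R}
    (R : ℝ) (hR : 0 < R)
    (φR : Fin d → ℝ)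
    (hφR : ∀ i, IsGreatest (φ i '' Icc 0 R) (φR i))
    -- the successive approximations
    (w : ℕ → Fin d → ℝ → ℝ)
    (hw0 : ∀ i r, w 0 i r = 1 / (d : ℝ))
    (hwk : ∀ k i r, 0 ≤ r →
      w (k + 1) i r = 1 / (d : ℝ) +
        ∫ t in (0:ℝ)..r,
          (∫ s in (0:ℝ)..t, s ^ (N - 1) * (φ i s * f i (fun j => w k j s))) / t ^ (N - 1)) :
    -- conclusions
    (∀ k ≥ 1,
      ∫ t in (1:ℝ)..(∑ i, w k i R),
          (∫ s in (1:ℝ)..t, ∑ i, f i (fun _ => s)) ^ (-(1/2) : ℝ) ≤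
        R * Real.sqrt (2 * ∑ i, φR i)) ∧
    (∃ B₁ B₂ : ℝ, ∀ k ≥ 1,
      (∑ i, w k i R) ≤ B₁ ∧ deriv (fun ρ => ∑ i, w k i ρ) R ≤ B₂) :=
  stmt10_general N d hd f hf_nonneg hC1 hfpos hC2 hC3 φ hφ_cont hφ_nonneg R hR φR hφR w hw0 hwk
end

section
/- Suppose (C1)–(C2) hold and p_1,…,p_d : [0,∞) → [0,∞) are continuous. Let z : [0,∞) → [0,∞) be nondecreasing with z(0) > 0 and satisfying z(r) = z(0) + ∫₀^r t^{1-N} ∫₀^t s^{N-1} (Σ_{i=1}^d p_i(s)) (Σ_{i=1}^d f_i(z(s),…,z(s))) ds dt for all r ≥ 0. Choose β₁ ∈ (0, z(0)] and define u_i^0 ≡ β₁ and u_i^k(r) = β₁ + ∫₀^r t^{1-N} ∫₀^t s^{N-1} p_i(s) f_i(u_1^{k-1}(s),…,u_d^{k-1}(s)) ds dt for k ≥ 1. Then u_i^k(r) ≤ z(r) for all i = 1,…,d, all k ≥ 0, and all r ≥ 0. -/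
/-!
Induction on `k`, carrying `β₁ ≤ u k i ≤ z`. By (C2), `p_i f_i(u^k) ≤ (Σ p_j) (Σ f_j(z,…,z))`
pointwise, so the double integral defining `u^{k+1}_i` is at most the one in the equation for `z`.
Only the larger integrand has to be integrable for this comparison (the `u^k` are not known to be
measurable), and it is: continuous times monotone. Integrability of `h` on `[0, r]` then bounds
the outer integrand, as `|∫₀ᵗ sᵐ h| ≤ tᵐ ∫₀ʳ |h|`.
-/

open MeasureTheory Set Filter

noncomputable def radialDoubleIntegral (m : ℕ) (h : ℝ → ℝ) (r : ℝ) : ℝ :=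
  ∫ t in (0:ℝ)..r, (∫ s in (0:ℝ)..t, s ^ m * h s) / t ^ m

namespace radialDoubleIntegral

variable {m : ℕ} {g h : ℝ → ℝ} {r : ℝ}

theorem norm_integral_pow_mul_le {t : ℝ} (ht : t ∈ Icc 0 r) (hh : IntegrableOn h (Icc 0 r)) :
    ‖∫ s in (0:ℝ)..t, s ^ m * h s‖ ≤ t ^ m * ∫ s in (0:ℝ)..r, ‖h s‖ := by
  have hh_norm : IntervalIntegrable (fun s => ‖h s‖) volume 0 r :=
    (intervalIntegrable_iff_integrableOn_Icc_of_le (ht.1.trans ht.2)).2 hh.norm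
  calc ‖∫ s in (0:ℝ)..t, s ^ m * h s‖
      ≤ |∫ s in (0:ℝ)..t, t ^ m * ‖h s‖| := by
        refine intervalIntegral.norm_integral_le_abs_of_norm_le ?_
          ((hh_norm.mono_set ?_).const_mul _)
        · refine ae_restrict_of_forall_mem measurableSet_uIoc fun s hs => ?_
          rw [uIoc_of_le ht.1] at hs
          rw [norm_mul, norm_pow, Real.norm_of_nonneg hs.1.le]
          exact mul_le_mul_of_nonneg_right (pow_le_pow_left₀ hs.1.le hs.2 m) (norm_nonneg _)
        · rw [uIcc_of_le ht.1, uIcc_of_le (ht.1.trans ht.2)]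
          exact Icc_subset_Icc_right ht.2
    _ = t ^ m * ∫ s in (0:ℝ)..t, ‖h s‖ := by
        rw [intervalIntegral.integral_const_mul, abs_of_nonneg]
        exact mul_nonneg (pow_nonneg ht.1 m)
          (intervalIntegral.integral_nonneg ht.1 fun _ _ => norm_nonneg _)
    _ ≤ t ^ m * ∫ s in (0:ℝ)..r, ‖h s‖ :=
        mul_le_mul_of_nonneg_left (intervalIntegral.integral_mono_interval le_rfl ht.1 ht.2
          (ae_of_all _ fun _ => norm_nonneg _) hh_norm) (pow_nonneg ht.1 m)

theorem integrableOn_integrand (hr : 0 ≤ r) (hh : IntegrableOn h (Icc 0 r)) :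
    IntegrableOn (fun t => (∫ s in (0:ℝ)..t, s ^ m * h s) / t ^ m) (Ioc 0 r) := by
  have hprim : ContinuousOn (fun t => ∫ s in (0:ℝ)..t, s ^ m * h s) (Icc 0 r) := by
    have := intervalIntegral.continuousOn_primitive_interval (μ := volume) (a := 0) (b := r)
      (f := fun s => s ^ m * h s) (by
        rw [uIcc_of_le hr]
        exact hh.continuousOn_mul (continuous_pow m).continuousOn isCompact_Icc)
    rwa [uIcc_of_le hr] at this
  have hcont : ContinuousOn (fun t => (∫ s in (0:ℝ)..t, s ^ m * h s) / t ^ m) (Ioc 0 r) :=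
    (hprim.mono Ioc_subset_Icc_self).div (continuous_pow m).continuousOn
      fun t ht => (pow_pos ht.1 m).ne'
  refine Integrable.mono' (g := fun _ => ∫ s in (0:ℝ)..r, ‖h s‖)
    (integrableOn_const measure_Ioc_lt_top.ne) (hcont.aestronglyMeasurable measurableSet_Ioc)
    (ae_restrict_of_forall_mem measurableSet_Ioc fun t ht => ?_)
  have htm : 0 < t ^ m := pow_pos ht.1 m
  rw [norm_div, Real.norm_of_nonneg htm.le, div_le_iff₀ htm, mul_comm]
  exact norm_integral_pow_mul_le (Ioc_subset_Icc_self ht) hh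

theorem integrand_nonneg {t : ℝ} (ht : 0 ≤ t) (hh : ∀ s ∈ Icc 0 t, 0 ≤ h s) :
    0 ≤ (∫ s in (0:ℝ)..t, s ^ m * h s) / t ^ m :=
  div_nonneg (intervalIntegral.integral_nonneg ht fun s hs =>
    mul_nonneg (pow_nonneg hs.1 m) (hh s hs)) (pow_nonneg ht m)

theorem nonneg (hr : 0 ≤ r) (hh : ∀ s ∈ Icc 0 r, 0 ≤ h s) : 0 ≤ radialDoubleIntegral m h r :=
  intervalIntegral.integral_nonneg hr fun _ ht =>
    integrand_nonneg ht.1 fun s hs => hh s ⟨hs.1, hs.2.trans ht.2⟩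

theorem mono (hr : 0 ≤ r) (hg : ∀ s ∈ Icc 0 r, 0 ≤ g s) (hgh : ∀ s ∈ Icc 0 r, g s ≤ h s)
    (hh : IntegrableOn h (Icc 0 r)) :
    radialDoubleIntegral m g r ≤ radialDoubleIntegral m h r := by
  unfold radialDoubleIntegral
  rw [intervalIntegral.integral_of_le hr, intervalIntegral.integral_of_le hr]
  refine integral_mono_of_nonneg (ae_restrict_of_forall_mem measurableSet_Ioc fun _ ht =>
    integrand_nonneg ht.1.le fun s hs => hg s ⟨hs.1, hs.2.trans ht.2⟩)
    (integrableOn_integrand hr hh) (ae_restrict_of_forall_mem measurableSet_Ioc fun t ht => ?_)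
  refine div_le_div_of_nonneg_right ?_ (pow_nonneg ht.1.le m)
  rw [intervalIntegral.integral_of_le ht.1.le, intervalIntegral.integral_of_le ht.1.le]
  have hsub : Ioc 0 t ⊆ Icc 0 r := fun s hs => ⟨hs.1.le, hs.2.trans ht.2⟩
  refine integral_mono_of_nonneg (ae_restrict_of_forall_mem measurableSet_Ioc fun s hs =>
    mul_nonneg (pow_nonneg hs.1.le m) (hg s (hsub hs)))
    ((hh.continuousOn_mul (continuous_pow m).continuousOn isCompact_Icc).mono_set hsub)
    (ae_restrict_of_forall_mem measurableSet_Ioc fun s hs =>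
      mul_le_mul_of_nonneg_left (hgh s (hsub hs)) (pow_nonneg hs.1.le m))

end radialDoubleIntegral

theorem monotoneOn_sum_apply_const {d : ℕ} {f : Fin d → (Fin d → ℝ) → ℝ}
    (hf_mono : ∀ j v w, (∀ i, 0 ≤ v i) → (∀ i, v i ≤ w i) → f j v ≤ f j w) :
    MonotoneOn (fun x : ℝ => ∑ j, f j fun _ => x) (Ici 0) := fun _ hx _ _ hxy =>
  Finset.sum_le_sum fun j _ => hf_mono j _ _ (fun _ => hx) fun _ => hxy

theorem apply_le_sum_apply_const {d : ℕ} {f : Fin d → (Fin d → ℝ) → ℝ}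
    (hf_nonneg : ∀ j v, (∀ i, 0 ≤ v i) → 0 ≤ f j v)
    (hf_mono : ∀ j v w, (∀ i, 0 ≤ v i) → (∀ i, v i ≤ w i) → f j v ≤ f j w)
    {i : Fin d} {v : Fin d → ℝ} {x : ℝ} (hv : ∀ j, 0 ≤ v j) (hvx : ∀ j, v j ≤ x) :
    f i v ≤ ∑ j, f j fun _ => x :=
  (hf_mono i _ _ hv hvx).trans <| Finset.single_le_sum
    (fun j _ => hf_nonneg j _ fun _ => (hv i).trans (hvx i)) (Finset.mem_univ i)

theorem stmt13_general
    (N d : ℕ)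
    (f : Fin d → (Fin d → ℝ) → ℝ)
    -- (C1)
    (hf_nonneg : ∀ j v, (∀ i, 0 ≤ v i) → 0 ≤ f j v)
    -- (C2)
    (hC2 : ∀ j v w, (∀ i, 0 ≤ v i) → (∀ i, v i ≤ w i) → f j v ≤ f j w)
    -- continuous nonnegative coefficients p₁,…,p_d
    (p : Fin d → ℝ → ℝ)
    (hp_cont : ∀ i, ContinuousOn (p i) (Ici 0))
    (hp_nonneg : ∀ i, ∀ t ≥ (0:ℝ), 0 ≤ p i t)
    -- the nondecreasing function z with z(0) > 0 solving the integral equation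
    (z : ℝ → ℝ)
    (hz_mono : MonotoneOn z (Ici 0))
    (hz : ∀ r ≥ (0:ℝ),
      z r = z 0 +
        ∫ t in (0:ℝ)..r,
          (∫ s in (0:ℝ)..t,
            s ^ (N - 1) * ((∑ i, p i s) * (∑ i, f i (fun _ => z s)))) / t ^ (N - 1))
    -- β₁ ∈ (0, z(0)]
    (β₁ : ℝ) (hβ₁ : 0 < β₁ ∧ β₁ ≤ z 0)
    -- the successive approximations
    (u : ℕ → Fin d → ℝ → ℝ)
    (hu0 : ∀ i r, u 0 i r = β₁)
    (huk : ∀ k i r, 0 ≤ r →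
      u (k + 1) i r = β₁ +
        ∫ t in (0:ℝ)..r,
          (∫ s in (0:ℝ)..t, s ^ (N - 1) * (p i s * f i (fun j => u k j s))) / t ^ (N - 1)) :
    -- conclusion
    ∀ k i, ∀ r ≥ (0:ℝ), u k i r ≤ z r := by
  obtain ⟨hβ, hβz⟩ := hβ₁
  have hz_ge : ∀ r, 0 ≤ r → β₁ ≤ z r := fun r hr => hβz.trans (hz_mono self_mem_Ici hr hr)
  have hsource_int : ∀ r, IntegrableOn (fun s => (∑ i, p i s) * ∑ i, f i fun _ => z s) (Icc 0 r) :=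
    fun r => ((((monotoneOn_sum_apply_const hC2).comp hz_mono fun s hs =>
      hβ.le.trans (hz_ge s hs)).mono Icc_subset_Ici_self).integrableOn_isCompact
      isCompact_Icc).continuousOn_mul
      ((continuousOn_finsetSum _ fun i _ => hp_cont i).mono Icc_subset_Ici_self) isCompact_Icc
  suffices h : ∀ k i r, 0 ≤ r → β₁ ≤ u k i r ∧ u k i r ≤ z r from
    fun k i r hr => (h k i r hr).2
  intro k
  induction k with
  | zero => exact fun i r hr => ⟨(hu0 i r).ge, (hu0 i r).trans_le (hz_ge r hr)⟩
  | succ k ih =>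
    intro i r hr
    have hu_nonneg : ∀ s ∈ Icc 0 r, ∀ j, 0 ≤ u k j s := fun s hs j => hβ.le.trans (ih j s hs.1).1
    have hsource_nonneg : ∀ s ∈ Icc 0 r, 0 ≤ p i s * f i fun j => u k j s := fun s hs =>
      mul_nonneg (hp_nonneg i s hs.1) (hf_nonneg i _ (hu_nonneg s hs))
    have hsource_le : ∀ s ∈ Icc 0 r,
        p i s * f i (fun j => u k j s) ≤ (∑ i, p i s) * ∑ i, f i fun _ => z s := fun s hs =>
      mul_le_mul (Finset.single_le_sum (fun j _ => hp_nonneg j s hs.1) (Finset.mem_univ i))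
        (apply_le_sum_apply_const hf_nonneg hC2 (hu_nonneg s hs) fun j => (ih j s hs.1).2)
        (hf_nonneg i _ (hu_nonneg s hs)) (Finset.sum_nonneg fun j _ => hp_nonneg j s hs.1)
    rw [huk k i r hr, hz r hr]
    exact ⟨le_add_of_nonneg_right (radialDoubleIntegral.nonneg hr hsource_nonneg),
      add_le_add hβz (radialDoubleIntegral.mono hr hsource_nonneg hsource_le (hsource_int r))⟩

theorem stmt13
    (N d : ℕ) (hN : 3 ≤ N) (hd : 1 ≤ d)
    (f : Fin d → (Fin d → ℝ) → ℝ)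
    -- (C1)
    (hf_nonneg : ∀ j v, (∀ i, 0 ≤ v i) → 0 ≤ f j v)
    (hC1 : ∀ j, ContDiffOn ℝ 1 (f j) {v : Fin d → ℝ | ∀ i, 0 ≤ v i})
    (hf0 : ∀ j, f j (fun _ => 0) = 0)
    (hfpos : ∀ j v, (∀ i, 0 ≤ v i) → (∃ i, 0 < v i) → 0 < f j v)
    -- (C2)
    (hC2 : ∀ j v w, (∀ i, 0 ≤ v i) → (∀ i, v i ≤ w i) → f j v ≤ f j w)
    -- continuous nonnegative coefficients p₁,…,p_d
    (p : Fin d → ℝ → ℝ)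
    (hp_cont : ∀ i, ContinuousOn (p i) (Ici 0))
    (hp_nonneg : ∀ i, ∀ t ≥ (0:ℝ), 0 ≤ p i t)
    -- the nondecreasing function z with z(0) > 0 solving the integral equation
    (z : ℝ → ℝ)
    (hz_mono : MonotoneOn z (Ici 0))
    (hz0 : 0 < z 0)
    (hz : ∀ r ≥ (0:ℝ),
      z r = z 0 +
        ∫ t in (0:ℝ)..r,
          (∫ s in (0:ℝ)..t,
            s ^ (N - 1) * ((∑ i, p i s) * (∑ i, f i (fun _ => z s)))) / t ^ (N - 1))
    -- β₁ ∈ (0, z(0)]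
    (β₁ : ℝ) (hβ₁ : 0 < β₁ ∧ β₁ ≤ z 0)
    -- the successive approximations
    (u : ℕ → Fin d → ℝ → ℝ)
    (hu0 : ∀ i r, u 0 i r = β₁)
    (huk : ∀ k i r, 0 ≤ r →
      u (k + 1) i r = β₁ +
        ∫ t in (0:ℝ)..r,
          (∫ s in (0:ℝ)..t, s ^ (N - 1) * (p i s * f i (fun j => u k j s))) / t ^ (N - 1)) :
    -- conclusion
    ∀ k i, ∀ r ≥ (0:ℝ), u k i r ≤ z r :=
  stmt13_general N d f hf_nonneg hC2 p hp_cont hp_nonneg z hz_mono hz β₁ hβ₁ u hu0 huk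
end

section
/- Suppose (C1)–(C2) hold and ψ_1,…,ψ_d : [0,∞) → [0,∞) are continuous with ∫₀^∞ t Σ_{j=1}^d ψ_j(t) dt = ∞. Let (u_1,…,u_d) be nonnegative nondecreasing bounded functions on [0,∞), not all identically zero, satisfying u_i(r) ≥ u_i(0) + ∫₀^r t^{1-N} ∫₀^t s^{N-1} ψ_i(s) f_i(u_1(s),…,u_d(s)) ds dt for all r ≥ 0 and i = 1,…,d, and suppose there exist R > 0 and M_1,…,M_d > 0 with u_i(r) ≥ M_i/2 for all r ≥ R. Then, writing c_0^i = f_i(M_1/2,…,M_d/2), m_1 = min{u_1(0),…,u_d(0)}, and m_2 = min{c_0^1,…,c_0^d}, one has Σ_{i=1}^d u_i(r) ≥ d m_1 + (m_2/N) ∫_R^r t Σ_{i=1}^d ψ_i(t) dt for r ≥ R, and hence Σ_{i=1}^d u_i(r) → ∞ as r → ∞, contradicting boundedness. -/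
/-!
The hypotheses are contradictory. Write `N = k + 2`. For `s ≥ R` monotonicity of `fᵢ` gives
`fᵢ(u(s)) ≥ fᵢ(M/2) ≥ m₂ > 0`, so the integral inequality and the boundedness of `uᵢ` bound
`m₂ ∫_R^r t^{1-N} ∫_R^t s^{N-1} ψᵢ(s) ds dt` uniformly in `r`. Integrating by parts,
`∫_R^r t^{-(k+1)} ∫_R^t s^{k+1} g(s) ds dt = k⁻¹ ∫_R^r s g(s) (1 - (s/r)^k) ds`,
and the weight `1 - (s/r)^k` is at least `1/2` for `s ≤ r/2`. Hence `∫_R^∞ t ψᵢ(t) dt < ∞` for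
every `i`, contradicting the divergence of `∫_0^∞ t Σⱼ ψⱼ(t) dt`.
-/

open MeasureTheory Set Filter

lemma hasDerivAt_sub_inv_pow_div {k : ℕ} (hk : k ≠ 0) (r : ℝ) {x : ℝ} (hx : x ≠ 0) :
    HasDerivAt (fun t => ((r ^ k)⁻¹ - (t ^ k)⁻¹) / k) (x ^ (k + 1))⁻¹ x := by
  obtain ⟨m, rfl⟩ : ∃ m, k = m + 1 := ⟨k - 1, by omega⟩
  refine ((((hasDerivAt_pow (m + 1) x).inv (pow_ne_zero _ hx)).const_sub
    (r ^ (m + 1))⁻¹).div_const ((m + 1 : ℕ) : ℝ)).congr_deriv ?_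
  rw [Nat.add_sub_cancel]
  field_simp
  ring

lemma integral_integral_pow_mul_div_pow {k : ℕ} (hk : k ≠ 0) {g : ℝ → ℝ} (hg : Continuous g)
    {R r : ℝ} (hR : 0 < R) (hRr : R ≤ r) :
    ∫ t in R..r, (∫ s in R..t, s ^ (k + 1) * g s) / t ^ (k + 1)
      = ∫ s in R..r, s * g s * (1 - (s / r) ^ k) / k := by
  have hpos : ∀ x ∈ uIcc R r, 0 < x := fun x hx =>
    hR.trans_le (by rw [uIcc_of_le hRr] at hx; exact hx.1)
  have hh : Continuous fun s : ℝ => s ^ (k + 1) * g s := (continuous_pow _).mul hg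
  -- the antiderivative of `t⁻¹ ^ (k + 1)` vanishing at `r` kills both boundary terms
  have hibp := intervalIntegral.integral_mul_deriv_eq_deriv_mul
    (fun x _ => (hh.integral_hasStrictDerivAt R x).hasDerivAt)
    (fun x hx => hasDerivAt_sub_inv_pow_div hk r (hpos x hx).ne') (hh.intervalIntegrable R r)
    (ContinuousOn.intervalIntegrable ((continuous_pow _).continuousOn.inv₀
      fun x hx => pow_ne_zero _ (hpos x hx).ne'))
  simp only [intervalIntegral.integral_same, sub_self, zero_div, mul_zero, zero_mul, zero_sub]
    at hibp
  simp_rw [div_eq_mul_inv (∫ s in R..(_ : ℝ), _), hibp, ← intervalIntegral.integral_neg]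
  refine intervalIntegral.integral_congr fun s hs => ?_
  have := (hpos s hs).ne'
  have : r ≠ 0 := (hR.trans_le hRr).ne'
  rw [div_pow]
  field_simp
  ring

lemma integral_integral_pow_mul_div_pow_of_continuousOn {k : ℕ} (hk : k ≠ 0) {g : ℝ → ℝ}
    {R r : ℝ} (hR : 0 < R) (hRr : R ≤ r) (hg : ContinuousOn g (Icc R r)) :
    ∫ t in R..r, (∫ s in R..t, s ^ (k + 1) * g s) / t ^ (k + 1)
      = ∫ s in R..r, s * g s * (1 - (s / r) ^ k) / k := by
  set g' : ℝ → ℝ := fun s => g (projIcc R r hRr s)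
  have hg' : Continuous g' := hg.comp_continuous
    (continuous_subtype_val.comp continuous_projIcc) fun s => (projIcc R r hRr s).2
  have hgg' : ∀ s ∈ Icc R r, g s = g' s := fun s hs => by simp [g', projIcc_of_mem hRr hs]
  have hRr' : uIcc R r = Icc R r := uIcc_of_le hRr
  calc ∫ t in R..r, (∫ s in R..t, s ^ (k + 1) * g s) / t ^ (k + 1)
      = ∫ t in R..r, (∫ s in R..t, s ^ (k + 1) * g' s) / t ^ (k + 1) := by
        refine intervalIntegral.integral_congr fun t ht => ?_
        rw [hRr'] at ht
        rw [intervalIntegral.integral_congr fun s hs => by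
          rw [hgg' s (uIcc_subset_Icc ⟨le_rfl, hRr⟩ ht hs)]]
    _ = ∫ s in R..r, s * g' s * (1 - (s / r) ^ k) / k :=
        integral_integral_pow_mul_div_pow hk hg' hR hRr
    _ = ∫ s in R..r, s * g s * (1 - (s / r) ^ k) / k :=
        intervalIntegral.integral_congr fun s hs => by rw [hgg' s (hRr' ▸ hs)]

lemma integral_mul_le_integral_integral_pow_mul_div_pow {k : ℕ} (hk : k ≠ 0) {g : ℝ → ℝ}
    {R x : ℝ} (hR : 0 < R) (hRx : R ≤ x) (hg : ContinuousOn g (Icc R (2 * x)))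
    (hg0 : ∀ s ∈ Icc R (2 * x), 0 ≤ g s) :
    ∫ s in R..x, s * g s
      ≤ 2 * k * ∫ t in R..2 * x, (∫ s in R..t, s ^ (k + 1) * g s) / t ^ (k + 1) := by
  set r := 2 * x
  have hxr : x ≤ r := by linarith
  have hRr : R ≤ r := hRx.trans hxr
  have hk' : (0 : ℝ) < k := by positivity
  have hweight : ∀ s ∈ Icc R r, 0 ≤ s * g s ∧ (s / r) ^ k ≤ s / r ∧ s / r ≤ 1 := fun s hs =>
    have hsr : s / r ≤ 1 := div_le_one_of_le₀ hs.2 (hR.le.trans hRr)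
    ⟨mul_nonneg (hR.le.trans hs.1) (hg0 s hs),
      pow_le_of_le_one (div_nonneg (hR.le.trans hs.1) (hR.le.trans hRr)) hsr hk, hsr⟩
  have hcont : ∀ a ∈ Icc R r, ContinuousOn (fun s => s * g s) (uIcc R a) := fun a ha =>
    continuousOn_id.mul (hg.mono (uIcc_subset_Icc ⟨le_rfl, hRr⟩ ha))
  rw [integral_integral_pow_mul_div_pow_of_continuousOn hk hR hRr hg]
  calc ∫ s in R..x, s * g s
      ≤ ∫ s in R..x, 2 * k * (s * g s * (1 - (s / r) ^ k) / k) := by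
        refine intervalIntegral.integral_mono_on hRx (hcont x ⟨hRx, hxr⟩).intervalIntegrable
          ((((hcont x ⟨hRx, hxr⟩).mul (by fun_prop)).div_const _).const_mul _).intervalIntegrable
          fun s hs => ?_
        obtain ⟨hsg, hpow, -⟩ := hweight s ⟨hs.1, hs.2.trans hxr⟩
        have : s / r ≤ 1 / 2 := by rw [div_le_iff₀ (by linarith)]; linarith [hs.2]
        rw [show (2 : ℝ) * k * (s * g s * (1 - (s / r) ^ k) / k)
          = 2 * (s * g s * (1 - (s / r) ^ k)) by field_simp]
        nlinarith
    _ = 2 * k * ∫ s in R..x, s * g s * (1 - (s / r) ^ k) / k :=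
        intervalIntegral.integral_const_mul _ _
    _ ≤ 2 * k * ∫ s in R..r, s * g s * (1 - (s / r) ^ k) / k := by
        refine mul_le_mul_of_nonneg_left (intervalIntegral.integral_mono_interval le_rfl hRx hxr
          (ae_restrict_of_forall_mem measurableSet_Ioc fun s hs => ?_)
          (((hcont r ⟨hRr, le_rfl⟩).mul (by fun_prop)).div_const _).intervalIntegrable)
          (by positivity)
        obtain ⟨hsg, hpow, hsr⟩ := hweight s (Ioc_subset_Icc_self hs)
        exact div_nonneg (mul_nonneg hsg (by linarith)) hk'.le

lemma intervalIntegrable_integral_pow_mul_div_pow {q : ℝ → ℝ} {r : ℝ} (n : ℕ) (hr : 0 ≤ r)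
    (hq : IntervalIntegrable q volume 0 r) :
    IntervalIntegrable (fun t => (∫ s in 0..t, s ^ n * q s) / t ^ n) volume 0 r := by
  have hF : ContinuousOn (fun t => ∫ s in 0..t, s ^ n * q s) (uIcc 0 r) :=
    intervalIntegral.continuousOn_primitive_interval'
      (hq.continuousOn_mul (continuous_pow n).continuousOn) left_mem_uIcc
  rw [uIcc_of_le hr] at hF
  refine IntervalIntegrable.mono_fun' (g := fun _ => ∫ s in 0..r, |q s|)
    intervalIntegrable_const ?_ ?_
  · rw [uIoc_of_le hr]
    refine ContinuousOn.aestronglyMeasurable ?_ measurableSet_Ioc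
    exact (hF.mono Ioc_subset_Icc_self).div (continuous_pow n).continuousOn
      fun t ht => pow_ne_zero n ht.1.ne'
  · rw [uIoc_of_le hr]
    refine ae_restrict_of_forall_mem measurableSet_Ioc fun t ht => ?_
    have ht0 : 0 < t := ht.1
    have hqt : IntervalIntegrable q volume 0 t :=
      hq.mono_set (uIcc_subset_uIcc_left (by rw [uIcc_of_le hr]; exact ⟨ht.1.le, ht.2⟩))
    have hnorm : ‖∫ s in 0..t, s ^ n * q s‖ ≤ t ^ n * ∫ s in 0..r, |q s| :=
      calc ‖∫ s in 0..t, s ^ n * q s‖ ≤ ∫ s in 0..t, ‖s ^ n * q s‖ :=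
            intervalIntegral.norm_integral_le_integral_norm ht0.le
        _ ≤ ∫ s in 0..t, t ^ n * |q s| := by
            refine intervalIntegral.integral_mono_on ht0.le
              (hqt.continuousOn_mul (continuous_pow n).continuousOn).norm
              (hqt.abs.const_mul _) fun s hs => ?_
            rw [norm_mul, norm_pow, Real.norm_of_nonneg hs.1, Real.norm_eq_abs]
            gcongr
            exacts [hs.1, hs.2]
        _ = t ^ n * ∫ s in 0..t, |q s| := intervalIntegral.integral_const_mul _ _
        _ ≤ t ^ n * ∫ s in 0..r, |q s| := by
            gcongr
            exact intervalIntegral.integral_mono_interval le_rfl ht0.le ht.2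
              (ae_of_all _ fun s => abs_nonneg (q s)) hq.abs
    change ‖(∫ s in 0..t, s ^ n * q s) / t ^ n‖ ≤ ∫ s in 0..r, |q s|
    rw [norm_div, norm_pow, Real.norm_of_nonneg ht0.le, div_le_iff₀' (by positivity)]
    exact hnorm

lemma integrableOn_Ioi_of_intervalIntegral_le {g : ℝ → ℝ} {a R C : ℝ} (haR : a ≤ R)
    (hg : ContinuousOn g (Ici a)) (hg0 : ∀ t ≥ R, 0 ≤ g t)
    (hC : ∀ x ≥ R, ∫ t in R..x, g t ≤ C) : IntegrableOn g (Ioi a) := by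
  rw [← Ioc_union_Ioi_eq_Ioi haR]
  refine ((hg.mono Icc_subset_Ici_self).integrableOn_Icc.mono_set Ioc_subset_Icc_self).union ?_
  refine integrableOn_Ioi_of_intervalIntegral_norm_bounded C R (l := atTop)
    (b := fun n : ℕ => R + n)
    (fun n => ((hg.mono (Ici_subset_Ici.2 haR)).mono Icc_subset_Ici_self).integrableOn_Icc.mono_set
      Ioc_subset_Icc_self)
    (tendsto_atTop_add_const_left _ _ tendsto_natCast_atTop_atTop)
    (Eventually.of_forall fun n => ?_)
  have hRn : R ≤ R + n := by simp
  rw [intervalIntegral.integral_congr fun t ht =>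
    Real.norm_of_nonneg (hg0 t (by rw [uIcc_of_le hRn] at ht; exact ht.1))]
  exact hC _ hRn

lemma mul_integral_pow_mul_le_integral_pow_mul {ψ q : ℝ → ℝ} {c R t : ℝ} (n : ℕ) (hR : 0 ≤ R)
    (hRt : R ≤ t) (hψ : ContinuousOn ψ (Icc R t)) (hq : IntervalIntegrable q volume 0 t)
    (hq0 : ∀ s ∈ Icc 0 t, 0 ≤ q s) (hψq : ∀ s ∈ Icc R t, c * ψ s ≤ q s) :
    c * ∫ s in R..t, s ^ n * ψ s ≤ ∫ s in 0..t, s ^ n * q s := by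
  have hqt := hq.continuousOn_mul (continuous_pow n).continuousOn
  have hψt := (continuous_pow n).continuousOn.mul (uIcc_of_le hRt ▸ hψ)
  have hRt' : R ∈ uIcc 0 t := by rw [uIcc_of_le (hR.trans hRt)]; exact ⟨hR, hRt⟩
  rw [← intervalIntegral.integral_const_mul]
  calc ∫ s in R..t, c * (s ^ n * ψ s)
      ≤ ∫ s in R..t, s ^ n * q s := by
        refine intervalIntegral.integral_mono_on hRt (hψt.intervalIntegrable.const_mul c)
          (hqt.mono_set (uIcc_subset_uIcc_right hRt')) fun s hs => ?_
        rw [mul_left_comm]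
        exact mul_le_mul_of_nonneg_left (hψq s hs) (pow_nonneg (hR.trans hs.1) _)
    _ ≤ ∫ s in 0..t, s ^ n * q s :=
        intervalIntegral.integral_mono_interval hR hRt le_rfl
          (ae_restrict_of_forall_mem measurableSet_Ioc fun s hs =>
            mul_nonneg (pow_nonneg hs.1.le _) (hq0 s (Ioc_subset_Icc_self hs))) hqt

lemma integral_mul_le_of_integral_integral_pow_mul_div_pow_le {k : ℕ} (hk : k ≠ 0)
    {ψ q : ℝ → ℝ} {c R B : ℝ} (hc : 0 < c) (hR : 0 < R) (hψ : ContinuousOn ψ (Ici 0))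
    (hψ0 : ∀ t ≥ 0, 0 ≤ ψ t) (hq : ∀ r ≥ 0, IntervalIntegrable q volume 0 r)
    (hq0 : ∀ s ≥ 0, 0 ≤ q s) (hψq : ∀ s ≥ R, c * ψ s ≤ q s)
    (hB : ∀ r ≥ 0, ∫ t in 0..r, (∫ s in 0..t, s ^ (k + 1) * q s) / t ^ (k + 1) ≤ B)
    {x : ℝ} (hx : R ≤ x) :
    c * ∫ t in R..x, t * ψ t ≤ 2 * k * B := by
  set r := 2 * x
  have hRr : R ≤ r := by linarith
  have hr : 0 ≤ r := by linarith
  have hpow : Continuous fun s : ℝ => s ^ (k + 1) := continuous_pow _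
  have hψR : ContinuousOn (fun s => s ^ (k + 1) * ψ s) (uIcc R r) :=
    hpow.continuousOn.mul (hψ.mono fun s hs => by
      rw [uIcc_of_le hRr] at hs; exact hR.le.trans hs.1)
  have hφ := intervalIntegrable_integral_pow_mul_div_pow (k + 1) hr (hq r hr)
  have hG : IntervalIntegrable (fun t => (∫ s in R..t, s ^ (k + 1) * ψ s) / t ^ (k + 1))
      volume R r :=
    ((intervalIntegral.continuousOn_primitive_interval' hψR.intervalIntegrable
      left_mem_uIcc).div hpow.continuousOn fun t ht => pow_ne_zero _
        (hR.trans_le (by rw [uIcc_of_le hRr] at ht; exact ht.1)).ne').intervalIntegrable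
  calc c * ∫ t in R..x, t * ψ t
      ≤ c * (2 * k * ∫ t in R..r, (∫ s in R..t, s ^ (k + 1) * ψ s) / t ^ (k + 1)) := by
        gcongr
        exact integral_mul_le_integral_integral_pow_mul_div_pow hk hR hx
          (hψ.mono fun s hs => hR.le.trans hs.1) fun s hs => hψ0 s (hR.le.trans hs.1)
    _ = 2 * k * ∫ t in R..r, c * ((∫ s in R..t, s ^ (k + 1) * ψ s) / t ^ (k + 1)) := by
        rw [intervalIntegral.integral_const_mul]; ring
    _ ≤ 2 * k * ∫ t in R..r, (∫ s in 0..t, s ^ (k + 1) * q s) / t ^ (k + 1) := by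
        gcongr
        refine intervalIntegral.integral_mono_on hRr (hG.const_mul c) (hφ.mono_set ?_)
          fun t ht => ?_
        · exact uIcc_subset_uIcc_right (by rw [uIcc_of_le hr]; exact ⟨hR.le, hRr⟩)
        · rw [← mul_div_assoc]
          refine div_le_div_of_nonneg_right (mul_integral_pow_mul_le_integral_pow_mul _ hR.le ht.1
            (hψ.mono fun s hs => hR.le.trans hs.1) (hq t (hR.le.trans ht.1))
            (fun s hs => hq0 s hs.1) fun s hs => hψq s hs.1) (pow_nonneg (hR.le.trans ht.1) _)
    _ ≤ 2 * k * ∫ t in 0..r, (∫ s in 0..t, s ^ (k + 1) * q s) / t ^ (k + 1) := by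
        gcongr
        refine intervalIntegral.integral_mono_interval hR.le hRr le_rfl
          (ae_restrict_of_forall_mem measurableSet_Ioc fun t ht => ?_) hφ
        exact div_nonneg (intervalIntegral.integral_nonneg ht.1.le fun s hs =>
          mul_nonneg (pow_nonneg hs.1 _) (hq0 s hs.1)) (pow_nonneg ht.1.le _)
    _ ≤ 2 * k * B := by
        gcongr
        exact hB r hr

theorem stmt14_general
    (N d : ℕ) (hN : 3 ≤ N)
    (f : Fin d → (Fin d → ℝ) → ℝ)
    -- (C1)
    (hf_nonneg : ∀ j v, (∀ i, 0 ≤ v i) → 0 ≤ f j v)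
    (hfpos : ∀ j v, (∀ i, 0 ≤ v i) → (∃ i, 0 < v i) → 0 < f j v)
    -- (C2)
    (hC2 : ∀ j v w, (∀ i, 0 ≤ v i) → (∀ i, v i ≤ w i) → f j v ≤ f j w)
    -- continuous nonnegative ψ₁,…,ψ_d with ∫₀^∞ t Σⱼ ψⱼ(t) dt = ∞
    (ψ : Fin d → ℝ → ℝ)
    (hψ_cont : ∀ i, ContinuousOn (ψ i) (Ici 0))
    (hψ_nonneg : ∀ i, ∀ t ≥ (0:ℝ), 0 ≤ ψ i t)
    (hdiv : ¬ IntegrableOn (fun t : ℝ => t * ∑ j, ψ j t) (Ioi 0))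
    -- (u₁,…,u_d) nonnegative nondecreasing bounded, not all identically zero
    (u : Fin d → ℝ → ℝ)
    (hu_nonneg : ∀ i, ∀ r ≥ (0:ℝ), 0 ≤ u i r)
    (hu_mono : ∀ i, MonotoneOn (u i) (Ici 0))
    (hu_bdd : ∀ i, ∃ M : ℝ, ∀ r ≥ (0:ℝ), u i r ≤ M)
    -- the integral inequality
    (hu_ineq : ∀ i, ∀ r ≥ (0:ℝ),
      u i 0 +
        ∫ t in (0:ℝ)..r,
          (∫ s in (0:ℝ)..t, s ^ (N - 1) * (ψ i s * f i (fun j => u j s))) / t ^ (N - 1)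
        ≤ u i r)
    -- R > 0 and M₁,…,M_d > 0 with uᵢ(r) ≥ Mᵢ/2 for r ≥ R
    (R : ℝ) (hR : 0 < R)
    (M : Fin d → ℝ) (hM : ∀ i, 0 < M i)
    (huM : ∀ i, ∀ r ≥ R, M i / 2 ≤ u i r)
    -- m₁ = min {u₁(0),…,u_d(0)}, m₂ = min {c₀¹,…,c₀^d} with c₀ⁱ = fᵢ(M₁/2,…,M_d/2)
    (m₁ : ℝ)
    (m₂ : ℝ) (hm₂ : IsLeast (range fun i => f i (fun j => M j / 2)) m₂) :
    -- conclusions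
    (∀ r ≥ R,
      (d : ℝ) * m₁ + m₂ / N * ∫ t in R..r, t * ∑ i, ψ i t ≤ ∑ i, u i r) ∧
    Tendsto (fun r => ∑ i, u i r) atTop atTop ∧
    False := by
  obtain ⟨k, hk, hNk⟩ : ∃ k, k ≠ 0 ∧ N - 1 = k + 1 := ⟨N - 2, by omega, by omega⟩
  have hm₂_pos : 0 < m₂ := by
    obtain ⟨i, rfl⟩ := hm₂.1
    exact hfpos i _ (fun j => (half_pos (hM j)).le) ⟨i, half_pos (hM i)⟩
  refine (hdiv ?_).elim
  simp only [Finset.mul_sum]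
  refine integrable_finsetSum Finset.univ fun i _ => ?_
  obtain ⟨B, hB⟩ := hu_bdd i
  set q : ℝ → ℝ := fun s => ψ i s * f i fun j => u j s
  have hq : ∀ r ≥ 0, IntervalIntegrable q volume 0 r := fun r hr => by
    have hsub : uIcc 0 r ⊆ Ici 0 := by rw [uIcc_of_le hr]; exact Icc_subset_Ici_self
    have hfu : MonotoneOn (fun s => f i fun j => u j s) (uIcc 0 r) := fun a ha b hb hab =>
      hC2 i _ _ (fun j => hu_nonneg j a (hsub ha)) fun j => hu_mono j (hsub ha) (hsub hb) hab
    exact hfu.intervalIntegrable.continuousOn_mul ((hψ_cont i).mono hsub)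
  have hq0 : ∀ s ≥ 0, 0 ≤ q s := fun s hs =>
    mul_nonneg (hψ_nonneg i s hs) (hf_nonneg i _ fun j => hu_nonneg j s hs)
  have hψq : ∀ s ≥ R, m₂ * ψ i s ≤ q s := fun s hs => by
    rw [mul_comm]
    refine mul_le_mul_of_nonneg_left ((hm₂.2 ⟨i, rfl⟩).trans ?_) (hψ_nonneg i s (hR.le.trans hs))
    exact hC2 i _ _ (fun j => (half_pos (hM j)).le) fun j => huM j s hs
  have hqB : ∀ r ≥ 0, ∫ t in 0..r, (∫ s in 0..t, s ^ (k + 1) * q s) / t ^ (k + 1) ≤ B :=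
    fun r hr => by linarith [hNk ▸ hu_ineq i r hr, hu_nonneg i 0 le_rfl, hB r hr]
  refine integrableOn_Ioi_of_intervalIntegral_le (C := 2 * k * B / m₂) hR.le
    (continuousOn_id.mul (hψ_cont i))
    (fun t ht => mul_nonneg (hR.le.trans ht) (hψ_nonneg i t (hR.le.trans ht))) fun x hx => ?_
  rw [le_div_iff₀' hm₂_pos]
  exact integral_mul_le_of_integral_integral_pow_mul_div_pow_le hk hm₂_pos hR (hψ_cont i)
    (hψ_nonneg i) hq hq0 hψq hqB hx

theorem stmt14
    (N d : ℕ) (hN : 3 ≤ N) (hd : 1 ≤ d)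
    (f : Fin d → (Fin d → ℝ) → ℝ)
    -- (C1)
    (hf_nonneg : ∀ j v, (∀ i, 0 ≤ v i) → 0 ≤ f j v)
    (hC1 : ∀ j, ContDiffOn ℝ 1 (f j) {v : Fin d → ℝ | ∀ i, 0 ≤ v i})
    (hf0 : ∀ j, f j (fun _ => 0) = 0)
    (hfpos : ∀ j v, (∀ i, 0 ≤ v i) → (∃ i, 0 < v i) → 0 < f j v)
    -- (C2)
    (hC2 : ∀ j v w, (∀ i, 0 ≤ v i) → (∀ i, v i ≤ w i) → f j v ≤ f j w)
    -- continuous nonnegative ψ₁,…,ψ_d with ∫₀^∞ t Σⱼ ψⱼ(t) dt = ∞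
    (ψ : Fin d → ℝ → ℝ)
    (hψ_cont : ∀ i, ContinuousOn (ψ i) (Ici 0))
    (hψ_nonneg : ∀ i, ∀ t ≥ (0:ℝ), 0 ≤ ψ i t)
    (hdiv : ¬ IntegrableOn (fun t : ℝ => t * ∑ j, ψ j t) (Ioi 0))
    -- (u₁,…,u_d) nonnegative nondecreasing bounded, not all identically zero
    (u : Fin d → ℝ → ℝ)
    (hu_nonneg : ∀ i, ∀ r ≥ (0:ℝ), 0 ≤ u i r)
    (hu_mono : ∀ i, MonotoneOn (u i) (Ici 0))
    (hu_bdd : ∀ i, ∃ M : ℝ, ∀ r ≥ (0:ℝ), u i r ≤ M)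
    (hu_nontriv : ∃ i, ∃ r ≥ (0:ℝ), u i r ≠ 0)
    -- the integral inequality
    (hu_ineq : ∀ i, ∀ r ≥ (0:ℝ),
      u i 0 +
        ∫ t in (0:ℝ)..r,
          (∫ s in (0:ℝ)..t, s ^ (N - 1) * (ψ i s * f i (fun j => u j s))) / t ^ (N - 1)
        ≤ u i r)
    -- R > 0 and M₁,…,M_d > 0 with uᵢ(r) ≥ Mᵢ/2 for r ≥ R
    (R : ℝ) (hR : 0 < R)
    (M : Fin d → ℝ) (hM : ∀ i, 0 < M i)
    (huM : ∀ i, ∀ r ≥ R, M i / 2 ≤ u i r)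
    -- m₁ = min {u₁(0),…,u_d(0)}, m₂ = min {c₀¹,…,c₀^d} with c₀ⁱ = fᵢ(M₁/2,…,M_d/2)
    (m₁ : ℝ) (hm₁ : IsLeast (range fun i => u i 0) m₁)
    (m₂ : ℝ) (hm₂ : IsLeast (range fun i => f i (fun j => M j / 2)) m₂) :
    -- conclusions
    (∀ r ≥ R,
      (d : ℝ) * m₁ + m₂ / N * ∫ t in R..r, t * ∑ i, ψ i t ≤ ∑ i, u i r) ∧
    Tendsto (fun r => ∑ i, u i r) atTop atTop ∧
    False :=
  stmt14_general N d hN f hf_nonneg hfpos hC2 ψ hψ_cont hψ_nonneg hdiv u hu_nonneg hu_mono hu_bdd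
    hu_ineq R hR M hM huM m₁ m₂ hm₂
end
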